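/- arXiv:0801.2132 — 8 statements merged into one kernel-verified Lean document; each statement's English description precedes it below -/
import Mathlib

section
/- If X and Y are asymorphic metric spaces (i.e., there is a surjective bornologous multi-map Φ : X ⇒ Y with surjective bornologous inverse), then there exist single-valued bornologous maps f : X → Y and g : Y → X with sup_{x∈X} dist(g(f(x)), x) < ∞ and sup_{y∈Y} dist(f(g(y)), y) < ∞; in particular X and Y are coarsely equivalent. -/
/-- The image of a set under a multi-map `Φ ⊆ X × Y`. -/
def MultiImage {X Y : Type*} (Φ : Set (X × Y)) (A : Set X) : Set Y :=
  {y | ∃ a ∈ A, (a, y) ∈ Φ}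

/-- A multi-map `Φ ⊆ X × Y` between metric spaces is bornologous if for every `ε > 0`
there is `δ > 0` such that every `A ⊆ X` with `diam A < ε` has `diam (Φ(A)) < δ`. -/
def MultiBornologous {X Y : Type*} [MetricSpace X] [MetricSpace Y]
    (Φ : Set (X × Y)) : Prop :=
  ∀ ε : ℝ, 0 < ε → ∃ δ : ℝ, 0 < δ ∧ ∀ A : Set X,
    EMetric.diam A < ENNReal.ofReal ε →
      EMetric.diam (MultiImage Φ A) < ENNReal.ofReal δ

/-- The inverse of a multi-map. -/
def MultiInv {X Y : Type*} (Φ : Set (X × Y)) : Set (Y × X) :=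
  {p | (p.2, p.1) ∈ Φ}

theorem MultiBornologous.exists_dist_le {X Y : Type*} [MetricSpace X] [MetricSpace Y]
    {Φ : Set (X × Y)} (hΦ : MultiBornologous Φ) (ε : ℝ) :
    ∃ δ : ℝ, ∀ x x' : X, ∀ y y' : Y, (x, y) ∈ Φ → (x', y') ∈ Φ →
      dist x x' ≤ ε → dist y y' ≤ δ := by
  obtain ⟨δ, -, hδ⟩ := hΦ (max ε 0 + 1) (by positivity)
  refine ⟨δ, fun x x' y y' hxy hxy' hxx' => ?_⟩
  have hpair : Metric.ediam ({x, x'} : Set X) < ENNReal.ofReal (max ε 0 + 1) := by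
    rw [Metric.ediam_pair, edist_dist]
    exact ENNReal.ofReal_lt_ofReal_iff'.mpr ⟨by linarith [le_max_left ε 0], by positivity⟩
  have hyy' : edist y y' < ENNReal.ofReal δ :=
    (Metric.edist_le_ediam_of_mem (s := MultiImage Φ {x, x'}) ⟨x, by simp, hxy⟩
      ⟨x', by simp, hxy'⟩).trans_lt (hδ _ hpair)
  exact (edist_lt_ofReal.mp hyy').le

theorem mem_multiInv {X Y : Type*} {Φ : Set (X × Y)} {x : X} {y : Y} :
    (y, x) ∈ MultiInv Φ ↔ (x, y) ∈ Φ :=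
  Iff.rfl

/-- If `Φ : X ⇒ Y` is a surjective bornologous multi-map with surjective bornologous
inverse, then there are single-valued bornologous maps `f : X → Y`, `g : Y → X` with
`sup_x dist (g (f x)) x < ∞` and `sup_y dist (f (g y)) y < ∞`; in particular `X` and
`Y` are coarsely equivalent. -/
theorem stmt5 {X Y : Type*} [MetricSpace X] [MetricSpace Y]
    (Φ : Set (X × Y))
    (hΦsurj : ∀ y : Y, ∃ x : X, (x, y) ∈ Φ)
    (hΦinvsurj : ∀ x : X, ∃ y : Y, (x, y) ∈ Φ)
    (hΦ : MultiBornologous Φ) (hΦinv : MultiBornologous (MultiInv Φ)) :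
    ∃ f : X → Y, ∃ g : Y → X,
      (∀ ε : ℝ, ∃ δ : ℝ, ∀ x x' : X, dist x x' ≤ ε → dist (f x) (f x') ≤ δ) ∧
      (∀ ε : ℝ, ∃ δ : ℝ, ∀ y y' : Y, dist y y' ≤ ε → dist (g y) (g y') ≤ δ) ∧
      (∃ C : ℝ, (∀ x : X, dist (g (f x)) x ≤ C) ∧ (∀ y : Y, dist (f (g y)) y ≤ C)) := by
  choose f hf using hΦinvsurj
  choose g hg using hΦsurj
  have hg' : ∀ y, (y, g y) ∈ MultiInv Φ := fun y => mem_multiInv.mpr (hg y)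
  have hf' : ∀ x, (f x, x) ∈ MultiInv Φ := fun x => mem_multiInv.mpr (hf x)
  refine ⟨f, g, fun ε => ?_, fun ε => ?_, ?_⟩
  · obtain ⟨δ, hδ⟩ := hΦ.exists_dist_le ε
    exact ⟨δ, fun x x' => hδ x x' _ _ (hf x) (hf x')⟩
  · obtain ⟨δ, hδ⟩ := hΦinv.exists_dist_le ε
    exact ⟨δ, fun y y' => hδ y y' _ _ (hg' y) (hg' y')⟩
  · -- `x` and `g (f x)` both lie in the image of the single point `f x` under `Φ⁻¹`.
    obtain ⟨C₁, hC₁⟩ := hΦ.exists_dist_le 0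
    obtain ⟨C₂, hC₂⟩ := hΦinv.exists_dist_le 0
    refine ⟨max C₁ C₂, fun x => ?_, fun y => ?_⟩
    · exact (hC₂ _ _ _ _ (hg' (f x)) (hf' x) (dist_self _).le).trans (le_max_right _ _)
    · exact (hC₁ _ _ _ _ (hf (g y)) (hg y) (dist_self _).le).trans (le_max_left _ _)
end

section
/- If metric spaces X and Y are coarsely equivalent via bornologous maps f : X → Y and g : Y → X with dist(g∘f, id_X) ≤ R and dist(f∘g, id_Y) ≤ R, then X and Y contain large subspaces X' ⊆ X and Y' ⊆ Y and a bijection h : X' → Y' such that both h and h^{-1} are bornologous. -/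
/-- A map between metric spaces is bornologous. -/
def BornMap {X Y : Type*} [MetricSpace X] [MetricSpace Y] (f : X → Y) : Prop :=
  ∀ ε : ℝ, ∃ δ : ℝ, ∀ a b : X, dist a b ≤ ε → dist (f a) (f b) ≤ δ

/-- A subset `L` of a metric space is large if there is `r ∈ ℝ` such that every point
of the space is at distance `< r` from `L`. -/
def IsLargeSubset {X : Type*} [MetricSpace X] (L : Set X) : Prop :=
  ∃ r : ℝ, ∀ x : X, ∃ l ∈ L, dist x l < r

/-! Take `Y' = range f` and for `X'` the image of a section `s` of `f` over its range, so that
`f` and `s` are mutually inverse bijections. Both sets are large because `f ∘ g` and `g ∘ f` are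
`R`-close to the identities, and `s` is bornologous because it stays within `R` of `g`:
`g y = g (f (s y))` is `R`-close to `s y`. -/

open Set Function

theorem IsLargeSubset.of_forall_exists_dist_le {X : Type*} [MetricSpace X] {L : Set X} (R : ℝ)
    (h : ∀ x, ∃ l ∈ L, dist x l ≤ R) : IsLargeSubset L :=
  ⟨R + 1, fun x => (h x).imp fun _ ⟨hl, hxl⟩ => ⟨hl, by linarith⟩⟩

section Bornologous
variable {X Y Z : Type*} [MetricSpace X] [MetricSpace Y] [MetricSpace Z]

theorem BornMap.domRestrict {f : X → Y} (hf : BornMap f) (s : Set X) :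
    BornMap (s.domRestrict f) :=
  fun ε => (hf ε).imp fun _ hδ a b => hδ a b

theorem BornMap.of_dist_le {φ ψ : Z → X} {R : ℝ} (hψ : BornMap ψ)
    (h : ∀ z, dist (φ z) (ψ z) ≤ R) : BornMap φ := by
  intro ε
  obtain ⟨δ, hδ⟩ := hψ ε
  refine ⟨R + δ + R, fun a b hab => ?_⟩
  calc dist (φ a) (φ b) ≤ dist (φ a) (ψ a) + dist (ψ a) (ψ b) + dist (ψ b) (φ b) :=
        dist_triangle4 _ _ _ _
    _ ≤ R + δ + R := by
        gcongr
        · exact h a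
        · exact hδ a b hab
        · rw [dist_comm]; exact h b

end Bornologous

section CoarseInverse
variable {X Y : Type*} {f : X → Y} {g : Y → X} {R : ℝ}

theorem isLargeSubset_range_of_dist_comp_le [MetricSpace Y] (hfg : ∀ y, dist (f (g y)) y ≤ R) :
    IsLargeSubset (range f) :=
  .of_forall_exists_dist_le R fun y => ⟨f (g y), mem_range_self _, by rw [dist_comm]; exact hfg y⟩

variable [MetricSpace X]

theorem dist_le_of_apply_eq (hgf : ∀ x, dist (g (f x)) x ≤ R) {a b : X} (hab : f a = f b) :
    dist a b ≤ 2 * R :=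
  calc dist a b ≤ dist a (g (f a)) + dist (g (f b)) b := by
        rw [hab]; exact dist_triangle _ _ _
    _ ≤ R + R := add_le_add ((dist_comm _ _).trans_le (hgf a)) (hgf b)
    _ = 2 * R := by ring

theorem dist_rangeSplitting_le (hgf : ∀ x, dist (g (f x)) x ≤ R) (y : range f) :
    dist (rangeSplitting f y) (g y) ≤ R := by
  simpa only [apply_rangeSplitting, dist_comm] using hgf (rangeSplitting f y)

theorem isLargeSubset_range_rangeSplitting (hgf : ∀ x, dist (g (f x)) x ≤ R) :
    IsLargeSubset (range (rangeSplitting f)) :=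
  .of_forall_exists_dist_le (2 * R) fun x =>
    ⟨_, mem_range_self (rangeFactorization f x),
      dist_le_of_apply_eq hgf (apply_rangeSplitting f (rangeFactorization f x)).symm⟩

end CoarseInverse

/-- If `X, Y` are coarsely equivalent via bornologous maps `f, g` with
`dist(g∘f, id) ≤ R` and `dist(f∘g, id) ≤ R`, then `X` and `Y` contain large subspaces
`X' ⊆ X`, `Y' ⊆ Y` and a bijection `h : X' → Y'` such that both `h` and `h⁻¹` are
bornologous. -/
theorem stmt6 {X Y : Type*} [MetricSpace X] [MetricSpace Y]
    (f : X → Y) (g : Y → X) (R : ℝ)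
    (hf : BornMap f) (hg : BornMap g)
    (hgf : ∀ x : X, dist (g (f x)) x ≤ R) (hfg : ∀ y : Y, dist (f (g y)) y ≤ R) :
    ∃ X' : Set X, ∃ Y' : Set Y, IsLargeSubset X' ∧ IsLargeSubset Y' ∧
      ∃ h : X' ≃ Y',
        (∀ ε : ℝ, ∃ δ : ℝ, ∀ a b : X', dist (a : X) (b : X) ≤ ε →
          dist (h a : Y) (h b : Y) ≤ δ) ∧
        (∀ ε : ℝ, ∃ δ : ℝ, ∀ a b : Y', dist (a : Y) (b : Y) ≤ ε →
          dist (h.symm a : X) (h.symm b : X) ≤ δ) := by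
  refine ⟨range (rangeSplitting f), range f, isLargeSubset_range_rangeSplitting hgf,
    isLargeSubset_range_of_dist_comp_le hfg,
    (Equiv.ofLeftInverse' _ _ (leftInverse_rangeSplitting f)).symm, hf.domRestrict _, ?_⟩
  exact (hg.domRestrict _).of_dist_le (dist_rangeSplitting_le hgf)
end

section
/- If T is a tower and S = T(k→) is the level subtower consisting of all elements whose level lies in the range of a strictly increasing sequence (k_n)_{n∈ω} with k_0 = 1, then the map next_S : [T] → [S] is an asymorphism between the bases, with respect to the path metrics of T and S respectively. -/
/-!
Minimal elements have level `1 = k 0`, so they lie in `S`, `next` fixes them, and the bases of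
`T` and `S` coincide. For minimal `x, y` with `a = sup(x, y)` and `lev (next a) = k n` we get
`d_T(x, y) = 2 lev a - 2` and `d_S(x, y) = 2 n`. Since upper cones are chains, `lev` takes every
value between `lev a` and `lev (next a)` on `[a, next a]`, and no level `k m` with `m < n` can
occur there; hence `n ≤ k (n - 1) < lev a` if `n > 0`. Conversely `lev a ≤ lev (next a) = k n`, so each
distance controls the other.
-/

open Set

section Tower

variable {T : Type*} [PartialOrder T]

/-- `Nat.card` is `0` on infinite types, so a level `0` signals an infinite interval. -/
def IsLevelFunction (lev : T → ℕ) : Prop :=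
  ∀ a x : T, IsMin x → x ≤ a → Nat.card (Icc x a) = lev a

theorem exists_isMin_le [WellFoundedLT T] (a : T) : ∃ x, IsMin x ∧ x ≤ a := by
  obtain ⟨x, hxa, hx⟩ := exists_minimal_le_of_wellFoundedLT (fun _ : T => True) a trivial
  exact ⟨x, minimal_true.mp hx, hxa⟩

theorem setOf_minimal_in_eq_setOf_isMin [WellFoundedLT T] {S : Set T}
    (hS : ∀ x, IsMin x → x ∈ S) :
    {s | s ∈ S ∧ ∀ t ∈ S, t ≤ s → t = s} = {x | IsMin x} := by
  ext s
  refine ⟨fun ⟨_, hs⟩ => ?_, fun hs => ⟨hS s hs, fun t _ hts => hs.eq_of_le hts⟩⟩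
  obtain ⟨x, hx, hxs⟩ := exists_isMin_le s
  exact hs x (hS x hx) hxs ▸ hx

namespace IsLevelFunction

variable {lev : T → ℕ} {x a b : T}

theorem lev_eq_one (hlev : IsLevelFunction lev) (hx : IsMin x) : lev x = 1 := by
  simp [← hlev x x hx le_rfl]

theorem finite_Icc (hlev : IsLevelFunction lev) (hx : IsMin x) (hxb : x ≤ b)
    (hb : lev b ≠ 0) : (Icc x b).Finite :=
  finite_of_ncard_ne_zero (by rwa [← Nat.card_coe_set_eq, hlev b x hx hxb])

theorem lev_lt_lev (hlev : IsLevelFunction lev) (hx : IsMin x) (hxa : x ≤ a) (hab : a < b)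
    (hb : lev b ≠ 0) : lev a < lev b := by
  rw [← hlev a x hx hxa, ← hlev b x hx (hxa.trans hab.le), Nat.card_coe_set_eq,
    Nat.card_coe_set_eq]
  exact ncard_lt_ncard (Icc_ssubset_Icc_right (hxa.trans hab.le) le_rfl hab)
    (hlev.finite_Icc hx (hxa.trans hab.le) hb)

theorem one_le_lev (hlev : IsLevelFunction lev) (hx : IsMin x) (hxa : x ≤ a) (hab : a ≤ b)
    (hb : lev b ≠ 0) : 1 ≤ lev a := by
  rw [← hlev a x hx hxa, Nat.card_coe_set_eq]
  exact (ncard_pos ((hlev.finite_Icc hx (hxa.trans hab) hb).subset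
    (Icc_subset_Icc_right hab))).mpr ⟨x, le_rfl, hxa⟩

theorem lev_le_lev (hlev : IsLevelFunction lev) (hx : IsMin x) (hxa : x ≤ a) (hab : a ≤ b)
    (hb : lev b ≠ 0) : lev a ≤ lev b := by
  rcases hab.eq_or_lt with rfl | hlt
  · exact le_rfl
  · exact (hlev.lev_lt_lev hx hxa hlt hb).le

/-- `[x, b]` is a chain with `lev b` elements on which `lev` is injective. -/
theorem bijOn_Icc (hlev : IsLevelFunction lev) (hchain : ∀ x : T, IsChain (· ≤ ·) {y | x ≤ y})
    (hx : IsMin x) (hxb : x ≤ b) (hb : lev b ≠ 0) :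
    BijOn lev (Icc x b) (Icc 1 (lev b)) := by
  have hmaps : MapsTo lev (Icc x b) (Icc 1 (lev b)) := fun c hc =>
    ⟨hlev.one_le_lev hx hc.1 hc.2 hb, hlev.lev_le_lev hx hc.1 hc.2 hb⟩
  have hlt : ∀ {c c'}, c ∈ Icc x b → c' ∈ Icc x b → c < c' → lev c < lev c' :=
    fun hc hc' hcc' => hlev.lev_lt_lev hx hc.1 hcc' (Nat.one_le_iff_ne_zero.mp (hmaps hc').1)
  have hinj : InjOn lev (Icc x b) := by
    intro c hc c' hc' hcc'
    rcases (hchain x).total hc.1 hc'.1 with h | h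
    · exact h.eq_or_lt.resolve_right fun h' => (hlt hc hc' h').ne hcc'
    · exact (h.eq_or_lt.resolve_right fun h' => (hlt hc' hc h').ne hcc'.symm).symm
  refine ⟨hmaps, hinj, (eq_of_subset_of_ncard_le hmaps.image_subset ?_ (Set.finite_Icc 1 _)).ge⟩
  rw [hinj.ncard_image, ← Nat.card_coe_set_eq (Icc x b), hlev b x hx hxb]
  simp

theorem exists_lev_eq (hlev : IsLevelFunction lev)
    (hchain : ∀ x : T, IsChain (· ≤ ·) {y | x ≤ y}) (hx : IsMin x) (hxa : x ≤ a) (hab : a ≤ b)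
    (hb : lev b ≠ 0) {l : ℕ} (hal : lev a ≤ l) (hlb : l ≤ lev b) :
    ∃ c ∈ Icc a b, lev c = l := by
  have ha := hlev.one_le_lev hx hxa hab hb
  obtain ⟨c, hc, rfl⟩ := (hlev.bijOn_Icc hchain hx (hxa.trans hab) hb).surjOn ⟨ha.trans hal, hlb⟩
  refine ⟨c, ⟨?_, hc.2⟩, rfl⟩
  rcases (hchain x).total hxa hc.1 with h | h
  · exact h
  · refine (h.eq_or_lt.resolve_right fun hca => ?_).ge
    exact (hlev.lev_lt_lev hx hc.1 hca (Nat.one_le_iff_ne_zero.mp ha)).not_ge hal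

theorem le_lev_of_isLeast (hlev : IsLevelFunction lev)
    (hchain : ∀ x : T, IsChain (· ≤ ·) {y | x ≤ y}) {k : ℕ → ℕ} (hk : StrictMono k)
    (hx : IsMin x) (hxa : x ≤ a) (hb : IsLeast {s | (∃ n, lev s = k n) ∧ a ≤ s} b) {n : ℕ}
    (hbn : lev b = k n) : n ≤ lev a := by
  cases n with
  | zero => exact Nat.zero_le _
  | succ m =>
    have hkm : k m < lev b := hbn ▸ hk m.lt_succ_self
    suffices k m < lev a by have := hk.id_le m; simp only [id] at this; omega
    by_contra! h
    obtain ⟨c, hc, hck⟩ := hlev.exists_lev_eq hchain hx hxa hb.1.2 (by omega) h hkm.le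
    have hcb : c = b := le_antisymm hc.2 (hb.2 ⟨⟨m, hck⟩, hc.1⟩)
    exact hkm.ne (hcb ▸ hck).symm

theorem exists_le_lev_le_of_isLeast [WellFoundedLT T] (hlev : IsLevelFunction lev)
    (hchain : ∀ x : T, IsChain (· ≤ ·) {y | x ≤ y}) {k : ℕ → ℕ} (hk : StrictMono k)
    (hk0 : 0 < k 0) (hb : IsLeast {s | (∃ n, lev s = k n) ∧ a ≤ s} b) :
    ∃ n, lev b = k n ∧ n ≤ lev a ∧ lev a ≤ k n := by
  obtain ⟨n, hn⟩ := hb.1.1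
  obtain ⟨x, hx, hxa⟩ := exists_isMin_le a
  refine ⟨n, hn, hlev.le_lev_of_isLeast hchain hk hx hxa hb hn,
    hn ▸ hlev.lev_le_lev hx hxa hb.1.2 ?_⟩
  rw [hn]
  exact (hk0.trans_le (hk.monotone n.zero_le)).ne'

end IsLevelFunction

end Tower

theorem stmt11_general {T : Type*} [PartialOrder T]
    (lev : T → ℕ) (lub : T → T → T)
    (hwf : WellFounded ((· < ·) : T → T → Prop))
    (hchain : ∀ x : T, IsChain (· ≤ ·) {y : T | x ≤ y})
    (hlev : ∀ a x : T, IsMin x → x ≤ a → Nat.card (Set.Icc x a) = lev a)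
    (k : ℕ → ℕ) (hk : StrictMono k) (hk0 : k 0 = 1)
    (S : Set T) (hS : S = {x : T | ∃ n : ℕ, lev x = k n})
    (next : T → T)
    (hnext : ∀ x : T, next x ∈ S ∧ x ≤ next x ∧ ∀ s ∈ S, x ≤ s → next x ≤ s)
    (levS : T → ℕ) (hlevS : ∀ (x : T) (n : ℕ), lev x = k n → levS x = n + 1) :
    ∀ dT dS : T → T → ℝ,
      dT = (fun x y => 2 * (lev (lub x y) : ℝ) - (lev x : ℝ) - (lev y : ℝ)) →
      dS = (fun x y => 2 * (levS (next (lub x y)) : ℝ) - (levS x : ℝ) - (levS y : ℝ)) →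
      Set.BijOn next {x : T | IsMin x} {s : T | s ∈ S ∧ ∀ t ∈ S, t ≤ s → t = s} ∧
      (∀ ε : ℝ, ∃ δ : ℝ, ∀ x y : T, IsMin x → IsMin y →
        dT x y ≤ ε → dS (next x) (next y) ≤ δ) ∧
      (∀ ε : ℝ, ∃ δ : ℝ, ∀ x y : T, IsMin x → IsMin y →
        dS (next x) (next y) ≤ ε → dT x y ≤ δ) := by
  intro dT dS hdT hdS
  have : WellFoundedLT T := ⟨hwf⟩
  replace hlev : IsLevelFunction lev := hlev
  subst hS
  have hleast (a : T) : IsLeast {s | (∃ n, lev s = k n) ∧ a ≤ s} (next a) :=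
    ⟨⟨(hnext a).1, (hnext a).2.1⟩, fun s hs => (hnext a).2.2 s hs.1 hs.2⟩
  have hminS (x : T) (hx : IsMin x) : ∃ n, lev x = k n := ⟨0, by rw [hlev.lev_eq_one hx, hk0]⟩
  have hnext_min (x : T) (hx : IsMin x) : next x = x :=
    hx.eq_of_le ((hleast x).2 ⟨hminS x hx, le_rfl⟩)
  have hdist (x y : T) (hx : IsMin x) (hy : IsMin y) : ∃ n : ℕ,
      dS (next x) (next y) = 2 * n ∧ dT x y = 2 * lev (lub x y) - 2 ∧
      n ≤ lev (lub x y) ∧ lev (lub x y) ≤ k n := by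
    obtain ⟨n, hn, hle, hge⟩ :=
      hlev.exists_le_lev_le_of_isLeast hchain hk (hk0 ▸ one_pos) (hleast (lub x y))
    refine ⟨n, ?_, ?_, hle, hge⟩
    · simp only [hdS, hnext_min x hx, hnext_min y hy, hlevS _ n hn,
        hlevS x 0 (by rw [hlev.lev_eq_one hx, hk0]), hlevS y 0 (by rw [hlev.lev_eq_one hy, hk0])]
      push_cast; ring
    · simp only [hdT, hlev.lev_eq_one hx, hlev.lev_eq_one hy]; push_cast; ring
  refine ⟨?_, fun ε => ⟨ε + 2, fun x y hx hy h => ?_⟩,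
    fun ε => ⟨2 * k ⌈ε⌉₊, fun x y hx hy h => ?_⟩⟩
  · rw [setOf_minimal_in_eq_setOf_isMin (S := {x | ∃ n, lev x = k n}) hminS]
    exact (bijOn_id _).congr fun x hx => (hnext_min x hx).symm
  · obtain ⟨n, hdS, hdT, hn, -⟩ := hdist x y hx hy
    have : (n : ℝ) ≤ lev (lub x y) := by exact_mod_cast hn
    rw [hdS]; rw [hdT] at h; linarith
  · obtain ⟨n, hdS, hdT, -, hlevk⟩ := hdist x y hx hy
    rw [hdS] at h; rw [hdT]
    have hnε : n ≤ ⌈ε⌉₊ := by exact_mod_cast (by linarith : (n : ℝ) ≤ ε).trans (Nat.le_ceil ε)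
    have : (lev (lub x y) : ℝ) ≤ k ⌈ε⌉₊ := by exact_mod_cast hlevk.trans (hk.monotone hnε)
    linarith

/-- Let `T` be a tower and `S = T(k)` the level subtower of all elements whose level
lies in the range of a strictly increasing sequence `k` with `k 0 = 1`.  Then the map
`next_S : [T] → [S]` is an asymorphism between the bases: it is a bijection between
the base of `T` and the base of `S` which is bornologous in both directions with
respect to the path metric `d_T` of `T` and the path metric `d_S` of `S` (computed
from the level function `levS` of `S`, where `levS x = n + 1` whenever `lev x = k n`,
and the least upper bound in `S` of two elements is `next` of their least upper bound
in `T`). -/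
theorem stmt11 {T : Type*} [PartialOrder T]
    (lev : T → ℕ) (lub : T → T → T)
    (hwf : WellFounded ((· < ·) : T → T → Prop))
    (hlub : ∀ x y : T, IsLUB {x, y} (lub x y))
    (hchain : ∀ x : T, IsChain (· ≤ ·) {y : T | x ≤ y})
    (hlev : ∀ a x : T, IsMin x → x ≤ a → Nat.card (Set.Icc x a) = lev a)
    (k : ℕ → ℕ) (hk : StrictMono k) (hk0 : k 0 = 1)
    (S : Set T) (hS : S = {x : T | ∃ n : ℕ, lev x = k n})
    (next : T → T)
    (hnext : ∀ x : T, next x ∈ S ∧ x ≤ next x ∧ ∀ s ∈ S, x ≤ s → next x ≤ s)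
    (levS : T → ℕ) (hlevS : ∀ (x : T) (n : ℕ), lev x = k n → levS x = n + 1) :
    ∀ dT dS : T → T → ℝ,
      dT = (fun x y => 2 * (lev (lub x y) : ℝ) - (lev x : ℝ) - (lev y : ℝ)) →
      dS = (fun x y => 2 * (levS (next (lub x y)) : ℝ) - (levS x : ℝ) - (levS y : ℝ)) →
      Set.BijOn next {x : T | IsMin x} {s : T | s ∈ S ∧ ∀ t ∈ S, t ≤ s → t = s} ∧
      (∀ ε : ℝ, ∃ δ : ℝ, ∀ x y : T, IsMin x → IsMin y →
        dT x y ≤ ε → dS (next x) (next y) ≤ δ) ∧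
      (∀ ε : ℝ, ∃ δ : ℝ, ∀ x y : T, IsMin x → IsMin y →
        dS (next x) (next y) ≤ ε → dT x y ≤ δ) :=
  stmt11_general lev lub hwf hchain hlev k hk hk0 S hS next hnext levS hlevS
end

section
/- A level-preserving monotone injection φ : T₁ → T₂ between towers restricts to an isometric embedding of the base [T₁] into the base [T₂] with respect to the path metrics. -/
/-!
Levels are cardinalities of intervals `[x, a]` above a minimal `x`, with `lev a = 0` when
`[x, a]` is infinite (`Nat.card` of an infinite type is `0`). The upper cone of `x` is a
well-ordered chain, so `[x, a]` contains exactly one point of each level `1, …, lev a` (of every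
positive level if `lev a = 0`). As `φ` is monotone and preserves levels, every point of positive
level in `[φ x, φ a]` is then the image of a point of `[x, a]`.

For minimal `x, y` with join `s`, the join `s₂` of `φ x, φ y` lies below `φ s`. If `lev s₂ ≠ 0`,
pulling `s₂` back into `[x, s]` and into `[y, s]` gives, by injectivity, a single upper bound
`u ≤ s` of `x` and `y`; hence `u = s` and `s₂ = φ s`. If `lev s₂ = 0`, then `lev s = 0` as well,
since `[φ x, s₂] ⊆ [φ x, φ s]`.
-/

namespace Tower

variable {T : Type*} [PartialOrder T] {lev : T → ℕ} {x a b : T}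

theorem exists_isMin_le (hwf : WellFounded ((· < ·) : T → T → Prop)) (a : T) :
    ∃ x, IsMin x ∧ x ≤ a := by
  have : WellFoundedLT T := ⟨hwf⟩
  obtain ⟨x, hxa, hx⟩ := exists_minimal_le_of_wellFoundedLT (fun _ => True) a trivial
  exact ⟨x, minimal_true.mp hx, hxa⟩

theorem lev_eq_one_of_isMin
    (hlev : ∀ a x : T, IsMin x → x ≤ a → Nat.card (Set.Icc x a) = lev a) (hx : IsMin x) :
    lev x = 1 := by
  simp [← hlev x x hx le_rfl]

theorem isMin_of_lev_eq_one (hwf : WellFounded ((· < ·) : T → T → Prop))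
    (hlev : ∀ a x : T, IsMin x → x ≤ a → Nat.card (Set.Icc x a) = lev a) (ha : lev a = 1) :
    IsMin a := by
  obtain ⟨x, hx, hxa⟩ := exists_isMin_le hwf a
  rw [← hlev a x hx hxa, Nat.card_eq_one_iff_unique] at ha
  have hax : (⟨a, hxa, le_rfl⟩ : Set.Icc x a) = ⟨x, le_rfl, hxa⟩ := ha.1.elim _ _
  rwa [show a = x from congrArg Subtype.val hax]

theorem ncard_Icc_eq_lev
    (hlev : ∀ a x : T, IsMin x → x ≤ a → Nat.card (Set.Icc x a) = lev a)
    (hx : IsMin x) (hxa : x ≤ a) : (Set.Icc x a).ncard = lev a := by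
  rw [← Nat.card_coe_set_eq, hlev a x hx hxa]

theorem lev_ne_zero_of_le
    (hlev : ∀ a x : T, IsMin x → x ≤ a → Nat.card (Set.Icc x a) = lev a)
    (hx : IsMin x) (hxa : x ≤ a) (hab : a ≤ b) (hb : lev b ≠ 0) : lev a ≠ 0 := by
  rw [← ncard_Icc_eq_lev hlev hx (hxa.trans hab)] at hb
  rw [← ncard_Icc_eq_lev hlev hx hxa]
  exact ((Set.ncard_pos ((Set.finite_of_ncard_ne_zero hb).subset
    (Set.Icc_subset_Icc_right hab))).mpr ⟨x, le_rfl, hxa⟩).ne'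

theorem lev_le_of_le
    (hlev : ∀ a x : T, IsMin x → x ≤ a → Nat.card (Set.Icc x a) = lev a)
    (hx : IsMin x) (hxa : x ≤ a) (hab : a ≤ b) (hb : lev b ≠ 0) : lev a ≤ lev b := by
  rw [← ncard_Icc_eq_lev hlev hx (hxa.trans hab)] at hb ⊢
  rw [← ncard_Icc_eq_lev hlev hx hxa]
  exact Set.ncard_le_ncard (Set.Icc_subset_Icc_right hab) (Set.finite_of_ncard_ne_zero hb)

theorem lev_lt_of_lt
    (hlev : ∀ a x : T, IsMin x → x ≤ a → Nat.card (Set.Icc x a) = lev a)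
    (hx : IsMin x) (hxa : x ≤ a) (hab : a < b) (hb : lev b ≠ 0) : lev a < lev b := by
  rw [← ncard_Icc_eq_lev hlev hx (hxa.trans hab.le)] at hb ⊢
  rw [← ncard_Icc_eq_lev hlev hx hxa]
  refine Set.ncard_lt_ncard ⟨Set.Icc_subset_Icc_right hab.le, fun h => ?_⟩
    (Set.finite_of_ncard_ne_zero hb)
  exact hab.not_ge (h ⟨hxa.trans hab.le, le_rfl⟩).2

theorem eq_of_lev_eq (hchain : ∀ x : T, IsChain (· ≤ ·) {y : T | x ≤ y})
    (hlev : ∀ a x : T, IsMin x → x ≤ a → Nat.card (Set.Icc x a) = lev a)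
    (hx : IsMin x) (hxa : x ≤ a) (hxb : x ≤ b) (hab : lev a = lev b) (ha : lev a ≠ 0) :
    a = b := by
  by_contra hne
  rcases (hchain x).total hxa hxb with hle | hle
  · exact (lev_lt_of_lt hlev hx hxa (hle.lt_of_ne hne) (hab ▸ ha)).ne hab
  · exact (lev_lt_of_lt hlev hx hxb (hle.lt_of_ne (Ne.symm hne)) ha).ne hab.symm

theorem exists_lev_eq_succ (hwf : WellFounded ((· < ·) : T → T → Prop))
    (hchain : ∀ x : T, IsChain (· ≤ ·) {y : T | x ≤ y})
    (hlev : ∀ a x : T, IsMin x → x ≤ a → Nat.card (Set.Icc x a) = lev a)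
    {u : T} (hx : IsMin x) (hxu : x ≤ u) (hua : u < a) (hu : lev u ≠ 0) :
    ∃ v, u < v ∧ v ≤ a ∧ lev v = lev u + 1 := by
  obtain ⟨v, ⟨huv, hva⟩, hvmin⟩ := hwf.has_min {v | u < v ∧ v ≤ a} ⟨a, hua, le_rfl⟩
  have hxv := hxu.trans huv.le
  have hIcc : Set.Icc x v = insert v (Set.Icc x u) := by
    refine (Set.insert_subset (Set.right_mem_Icc.mpr hxv)
      (Set.Icc_subset_Icc_right huv.le)).antisymm' ?_
    rintro w ⟨hxw, hwv⟩
    rcases hwv.eq_or_lt with rfl | hwv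
    · exact Set.mem_insert _ _
    · refine Or.inr ⟨hxw, ?_⟩
      rcases (hchain x).total hxw hxu with hwu | huw
      · exact hwu
      · rcases huw.eq_or_lt with rfl | huw
        · exact le_rfl
        · exact absurd hwv (hvmin w ⟨huw, hwv.le.trans hva⟩)
  refine ⟨v, huv, hva, ?_⟩
  rw [← ncard_Icc_eq_lev hlev hx hxu] at hu ⊢
  rw [← ncard_Icc_eq_lev hlev hx hxv, hIcc,
    Set.ncard_insert_of_notMem (fun h => huv.not_ge h.2) (Set.finite_of_ncard_ne_zero hu)]

theorem exists_lev_eq (hwf : WellFounded ((· < ·) : T → T → Prop))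
    (hchain : ∀ x : T, IsChain (· ≤ ·) {y : T | x ≤ y})
    (hlev : ∀ a x : T, IsMin x → x ≤ a → Nat.card (Set.Icc x a) = lev a)
    (hx : IsMin x) (hxa : x ≤ a) {n : ℕ} (hn : 1 ≤ n) (hna : n ≤ lev a ∨ lev a = 0) :
    ∃ u, x ≤ u ∧ u ≤ a ∧ lev u = n := by
  induction n, hn using Nat.le_induction with
  | base => exact ⟨x, le_rfl, hxa, lev_eq_one_of_isMin hlev hx⟩
  | succ n hn ih =>
    obtain ⟨u, hxu, hua, hu⟩ := ih (hna.imp_left Nat.le_of_succ_le)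
    have hua : u < a := hua.lt_of_ne (by rintro rfl; omega)
    obtain ⟨v, huv, hva, hv⟩ := exists_lev_eq_succ hwf hchain hlev hx hxu hua (by omega)
    exact ⟨v, hxu.trans huv.le, hva, hu ▸ hv⟩

section Map

variable {T₁ T₂ : Type*} [PartialOrder T₁] [PartialOrder T₂] {lev₁ : T₁ → ℕ} {lev₂ : T₂ → ℕ}
  {φ : T₁ → T₂} {x a : T₁}

theorem isMin_map_of_lev_eq (hwf₂ : WellFounded ((· < ·) : T₂ → T₂ → Prop))
    (hlev₁ : ∀ a x : T₁, IsMin x → x ≤ a → Nat.card (Set.Icc x a) = lev₁ a)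
    (hlev₂ : ∀ a x : T₂, IsMin x → x ≤ a → Nat.card (Set.Icc x a) = lev₂ a)
    (hlevp : ∀ x : T₁, lev₂ (φ x) = lev₁ x) (hx : IsMin x) : IsMin (φ x) :=
  isMin_of_lev_eq_one hwf₂ hlev₂ (by rw [hlevp, lev_eq_one_of_isMin hlev₁ hx])

theorem mem_image_Icc_of_lev_ne_zero (hwf₁ : WellFounded ((· < ·) : T₁ → T₁ → Prop))
    (hchain₁ : ∀ x : T₁, IsChain (· ≤ ·) {y : T₁ | x ≤ y})
    (hlev₁ : ∀ a x : T₁, IsMin x → x ≤ a → Nat.card (Set.Icc x a) = lev₁ a)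
    (hwf₂ : WellFounded ((· < ·) : T₂ → T₂ → Prop))
    (hchain₂ : ∀ x : T₂, IsChain (· ≤ ·) {y : T₂ | x ≤ y})
    (hlev₂ : ∀ a x : T₂, IsMin x → x ≤ a → Nat.card (Set.Icc x a) = lev₂ a)
    (hmono : Monotone φ) (hlevp : ∀ x : T₁, lev₂ (φ x) = lev₁ x)
    (hx : IsMin x) (hxa : x ≤ a) {w : T₂} (hw : w ∈ Set.Icc (φ x) (φ a)) (hw₀ : lev₂ w ≠ 0) :
    w ∈ φ '' Set.Icc x a := by
  have hφx := isMin_map_of_lev_eq hwf₂ hlev₁ hlev₂ hlevp hx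
  have hwa : lev₂ w ≤ lev₁ a ∨ lev₁ a = 0 := by
    rcases eq_or_ne (lev₁ a) 0 with ha | ha
    · exact Or.inr ha
    · rw [← hlevp] at ha ⊢
      exact Or.inl (lev_le_of_le hlev₂ hφx hw.1 hw.2 ha)
  obtain ⟨u, hxu, hua, hu⟩ :=
    exists_lev_eq hwf₁ hchain₁ hlev₁ hx hxa (Nat.one_le_iff_ne_zero.mpr hw₀) hwa
  exact ⟨u, ⟨hxu, hua⟩, eq_of_lev_eq hchain₂ hlev₂ hφx (hmono hxu) hw.1 (by rw [hlevp, hu])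
    (by rwa [hlevp, hu])⟩

end Map

end Tower

/-- A level-preserving monotone injection between towers restricts to an isometric
embedding of the bases with respect to the path metrics. -/
theorem stmt12 {T₁ T₂ : Type*} [PartialOrder T₁] [PartialOrder T₂]
    (lev₁ : T₁ → ℕ) (lub₁ : T₁ → T₁ → T₁)
    (hwf₁ : WellFounded ((· < ·) : T₁ → T₁ → Prop))
    (hlub₁ : ∀ x y : T₁, IsLUB {x, y} (lub₁ x y))
    (hchain₁ : ∀ x : T₁, IsChain (· ≤ ·) {y : T₁ | x ≤ y})
    (hlev₁ : ∀ a x : T₁, IsMin x → x ≤ a → Nat.card (Set.Icc x a) = lev₁ a)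
    (lev₂ : T₂ → ℕ) (lub₂ : T₂ → T₂ → T₂)
    (hwf₂ : WellFounded ((· < ·) : T₂ → T₂ → Prop))
    (hlub₂ : ∀ x y : T₂, IsLUB {x, y} (lub₂ x y))
    (hchain₂ : ∀ x : T₂, IsChain (· ≤ ·) {y : T₂ | x ≤ y})
    (hlev₂ : ∀ a x : T₂, IsMin x → x ≤ a → Nat.card (Set.Icc x a) = lev₂ a)
    (φ : T₁ → T₂) (hinj : Function.Injective φ) (hmono : Monotone φ)
    (hlevp : ∀ x : T₁, lev₂ (φ x) = lev₁ x) :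
    ∀ x y : T₁, IsMin x → IsMin y →
      2 * (lev₂ (lub₂ (φ x) (φ y)) : ℝ) - (lev₂ (φ x) : ℝ) - (lev₂ (φ y) : ℝ) =
        2 * (lev₁ (lub₁ x y) : ℝ) - (lev₁ x : ℝ) - (lev₁ y : ℝ) := by
  intro x y hx hy
  set s := lub₁ x y
  set s₂ := lub₂ (φ x) (φ y)
  suffices h : lev₂ s₂ = lev₁ s by rw [hlevp, hlevp, h]
  have hxs : x ≤ s := (hlub₁ x y).1 (by simp)
  have hys : y ≤ s := (hlub₁ x y).1 (by simp)
  have hxs₂ : φ x ≤ s₂ := (hlub₂ (φ x) (φ y)).1 (by simp)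
  have hys₂ : φ y ≤ s₂ := (hlub₂ (φ x) (φ y)).1 (by simp)
  have hs₂s : s₂ ≤ φ s := (hlub₂ (φ x) (φ y)).2 (by simp [hmono hxs, hmono hys])
  rcases eq_or_ne (lev₂ s₂) 0 with hs₂ | hs₂
  · by_contra hs
    rw [hs₂, eq_comm, ← hlevp] at hs
    exact Tower.lev_ne_zero_of_le hlev₂ (Tower.isMin_map_of_lev_eq hwf₂ hlev₁ hlev₂ hlevp hx)
      hxs₂ hs₂s hs hs₂
  obtain ⟨u, ⟨hxu, hus⟩, hu⟩ := Tower.mem_image_Icc_of_lev_ne_zero hwf₁ hchain₁ hlev₁ hwf₂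
    hchain₂ hlev₂ hmono hlevp hx hxs ⟨hxs₂, hs₂s⟩ hs₂
  obtain ⟨v, ⟨hyv, -⟩, hv⟩ := Tower.mem_image_Icc_of_lev_ne_zero hwf₁ hchain₁ hlev₁ hwf₂
    hchain₂ hlev₂ hmono hlevp hy hys ⟨hys₂, hs₂s⟩ hs₂
  obtain rfl : u = v := hinj (hu.trans hv.symm)
  have hsu : s ≤ u := (hlub₁ x y).2 (by simp [hxu, hyv])
  rw [← hu, hlevp, hus.antisymm hsu]
end

section
/- If G is a group that is the union of an increasing sequence of subgroups H₁ ⊆ H₂ ⊆ ⋯ with H₀ trivial, then the set T = {gH_n : g ∈ G, n ∈ ℕ} of cosets, ordered by inclusion, is a homogeneous tower in which every element of level n+1 has exactly [H_{n+1} : H_n] parents. -/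
/-!
A coset `aH_m` lies in `bH_n` exactly when `m ≤ n` and `bH_n = aH_n`, so the cosets above
a fixed one form the chain `aH_m ⊆ aH_{m+1} ⊆ ⋯`; this gives the partial order,
well-foundedness, linear upper cones and levels at once. Two cosets `aH_m`, `bH_n` have a
common upper bound since `a⁻¹b` lies in some `H_N`, and the least such `N ≥ m, n` gives the
least upper bound. The parents of `gH_{n+1}` are the cosets of `H_n` it contains, i.e. a fibre
of `G ⧸ H_n → G ⧸ H_{n+1}`, and `G ⧸ H_n ≃ G ⧸ H_{n+1} × H_{n+1} ⧸ H_n` counts them.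
-/

theorem Subgroup.card_quotientMapOfLE_preimage_singleton {α : Type*} [Group α]
    {s t : Subgroup α} (h : s ≤ t) (q : α ⧸ t) :
    Nat.card (quotientMapOfLE h ⁻¹' {q}) = s.relIndex t := by
  let e : quotientMapOfLE h ⁻¹' {q} ≃ {p : (α ⧸ t) × t ⧸ s.subgroupOf t // p.1 = q} :=
    (quotientEquivProdOfLE h).subtypeEquiv fun _ => Iff.rfl
  rw [Nat.card_congr (e.trans (Equiv.prodSubtypeFstEquivSubtypeProd (p := (· = q)))),
    Nat.card_prod, Nat.card_unique, one_mul]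
  rfl

namespace CosetTower

open QuotientGroup

variable {G : Type*} [Group G] {H : ℕ → Subgroup G}

variable (H) in
def CosetLE (a b : Σ n, G ⧸ H n) : Prop :=
  a.1 ≤ b.1 ∧ ∃ g : G, a.2 = mk g ∧ b.2 = mk g

theorem mk_eq_mk_of_le (hmono : Monotone H) {m n : ℕ} (hmn : m ≤ n) {g g' : G}
    (h : (mk g : G ⧸ H m) = mk g') : (mk g : G ⧸ H n) = mk g' :=
  QuotientGroup.eq.mpr (hmono hmn (QuotientGroup.eq.mp h))

theorem cosetLE_iff (hmono : Monotone H) {a b : Σ n, G ⧸ H n} {g : G} (ha : a.2 = mk g) :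
    CosetLE H a b ↔ a.1 ≤ b.1 ∧ b.2 = mk g := by
  refine ⟨fun ⟨hab, g', ha', hb⟩ => ⟨hab, hb.trans ?_⟩, fun ⟨hab, hb⟩ => ⟨hab, g, ha, hb⟩⟩
  exact mk_eq_mk_of_le hmono hab (ha'.symm.trans ha)

theorem cosetLE_refl (a : Σ n, G ⧸ H n) : CosetLE H a a := by
  obtain ⟨g, hg⟩ := mk_surjective a.2
  exact ⟨le_rfl, g, hg.symm, hg.symm⟩

theorem eq_of_cosetLE_of_fst_eq {a b : Σ n, G ⧸ H n} (hab : CosetLE H a b) (h : a.1 = b.1) :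
    a = b := by
  obtain ⟨m, x⟩ := a
  obtain ⟨n, y⟩ := b
  cases h
  obtain ⟨-, g, hx, hy⟩ := hab
  exact congrArg (Sigma.mk m) (hx.trans hy.symm)

theorem isPartialOrder_cosetLE (hmono : Monotone H) :
    IsPartialOrder (Σ n, G ⧸ H n) (CosetLE H) where
  refl := cosetLE_refl
  trans a b c := by
    rintro ⟨hab, g, ha, hb⟩ hbc
    exact (cosetLE_iff hmono ha).mpr
      ⟨hab.trans hbc.1, ((cosetLE_iff hmono hb).mp hbc).2⟩
  antisymm _ _ hab hba := eq_of_cosetLE_of_fst_eq hab (le_antisymm hab.1 hba.1)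

theorem wellFounded_cosetLT :
    WellFounded fun a b : Σ n, G ⧸ H n => CosetLE H a b ∧ a ≠ b := by
  refine Subrelation.wf (r := InvImage (· < ·) Sigma.fst) ?_ (InvImage.wf _ wellFounded_lt)
  rintro a b ⟨hab, hne⟩
  exact lt_of_le_of_ne hab.1 fun h => hne (eq_of_cosetLE_of_fst_eq hab h)

theorem cosetLE_total_of_cosetLE (hmono : Monotone H) {a b c : Σ n, G ⧸ H n}
    (hab : CosetLE H a b) (hac : CosetLE H a c) : CosetLE H b c ∨ CosetLE H c b := by
  obtain ⟨-, g, ha, hb⟩ := hab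
  have hc := ((cosetLE_iff hmono ha).mp hac).2
  rcases le_total b.1 c.1 with hbc | hcb
  · exact Or.inl ((cosetLE_iff hmono hb).mpr ⟨hbc, hc⟩)
  · exact Or.inr ((cosetLE_iff hmono hc).mpr ⟨hcb, hb⟩)

theorem exists_lub (hmono : Monotone H) (hunion : ∀ g : G, ∃ n, g ∈ H n)
    (a b : Σ n, G ⧸ H n) :
    ∃ s, CosetLE H a s ∧ CosetLE H b s ∧
      ∀ t, CosetLE H a t → CosetLE H b t → CosetLE H s t := by
  classical
  obtain ⟨g, hg⟩ := mk_surjective a.2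
  obtain ⟨g', hg'⟩ := mk_surjective b.2
  have hex : ∃ N, a.1 ≤ N ∧ b.1 ≤ N ∧ (mk g : G ⧸ H N) = mk g' := by
    obtain ⟨k, hk⟩ := hunion (g⁻¹ * g')
    refine ⟨max (max a.1 b.1) k, le_max_of_le_left (le_max_left _ _),
      le_max_of_le_left (le_max_right _ _), QuotientGroup.eq.mpr (hmono (le_max_right _ _) hk)⟩
  obtain ⟨haN, hbN, hN⟩ := Nat.find_spec hex
  refine ⟨⟨Nat.find hex, mk g⟩, (cosetLE_iff hmono hg.symm).mpr ⟨haN, rfl⟩,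
    (cosetLE_iff hmono hg'.symm).mpr ⟨hbN, hN⟩, fun t hat hbt => ?_⟩
  obtain ⟨hat, hta⟩ := (cosetLE_iff hmono hg.symm).mp hat
  obtain ⟨hbt, htb⟩ := (cosetLE_iff hmono hg'.symm).mp hbt
  exact (cosetLE_iff hmono rfl).mpr ⟨Nat.find_min' hex ⟨hat, hbt, hta.symm.trans htb⟩, hta⟩

theorem fst_eq_zero_of_minimal {x : Σ n, G ⧸ H n} (hmin : ∀ w, CosetLE H w x → w = x) :
    x.1 = 0 := by
  obtain ⟨g, hg⟩ := mk_surjective x.2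
  exact (congrArg Sigma.fst (hmin ⟨0, mk g⟩ ⟨Nat.zero_le _, g, rfl, hg.symm⟩)).symm

theorem card_interval_of_minimal (hmono : Monotone H) {a x : Σ n, G ⧸ H n}
    (hxa : CosetLE H x a) (hmin : ∀ w, CosetLE H w x → w = x) :
    Nat.card {w // CosetLE H x w ∧ CosetLE H w a} = a.1 + 1 := by
  obtain ⟨g, hg⟩ := mk_surjective x.2
  have hx0 := fst_eq_zero_of_minimal hmin
  have hag := ((cosetLE_iff hmono hg.symm).mp hxa).2
  suffices {w | CosetLE H x w ∧ CosetLE H w a} =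
      Set.range fun k : Fin (a.1 + 1) => (⟨k, mk g⟩ : Σ n, G ⧸ H n) by
    rw [← Nat.card_fin (a.1 + 1), ← Nat.card_range_of_injective
      (f := fun k : Fin (a.1 + 1) => (⟨k, mk g⟩ : Σ n, G ⧸ H n)), ← this]
    · rfl
    · intro k k' h
      exact Fin.ext (congrArg Sigma.fst h)
  refine Set.Subset.antisymm ?_ ?_
  · rintro ⟨k, y⟩ ⟨hxw, hwa⟩
    obtain ⟨-, hy⟩ := (cosetLE_iff hmono hg.symm).mp hxw
    exact ⟨⟨k, Nat.lt_succ_of_le hwa.1⟩, congrArg (Sigma.mk k) hy.symm⟩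
  · rintro _ ⟨k, rfl⟩
    exact ⟨(cosetLE_iff hmono hg.symm).mpr ⟨hx0 ▸ k.1.zero_le, rfl⟩,
      (cosetLE_iff hmono rfl).mpr ⟨Nat.lt_succ_iff.mp k.2, hag⟩⟩

theorem card_parents_of_fst_eq_succ (hmono : Monotone H) {x : Σ n, G ⧸ H n} {n : ℕ}
    (hx : x.1 = n + 1) :
    Nat.card {w // CosetLE H w x ∧ w ≠ x ∧ w.1 = n} = (H n).relIndex (H (n + 1)) := by
  obtain ⟨_, q⟩ := x
  subst hx
  have hparents : {w | CosetLE H w ⟨n + 1, q⟩ ∧ w ≠ ⟨n + 1, q⟩ ∧ w.1 = n} =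
      Sigma.mk n '' (Subgroup.quotientMapOfLE (hmono n.le_succ) ⁻¹' {q}) := by
    refine Set.Subset.antisymm ?_ ?_
    · rintro ⟨k, y⟩ ⟨hyq, -, rfl⟩
      obtain ⟨g, rfl⟩ := mk_surjective y
      exact ⟨mk g, ((cosetLE_iff hmono rfl).mp hyq).2.symm, rfl⟩
    · rintro _ ⟨y, hy, rfl⟩
      obtain ⟨g, rfl⟩ := mk_surjective y
      refine ⟨(cosetLE_iff hmono rfl).mpr ⟨n.le_succ, hy.symm⟩, fun h => ?_, rfl⟩
      exact n.succ_ne_self (congrArg Sigma.fst h).symm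
  rw [← Subgroup.card_quotientMapOfLE_preimage_singleton (hmono n.le_succ) q,
    ← Nat.card_image_of_injective (f := Sigma.mk (β := fun n => G ⧸ H n) n) sigma_mk_injective]
  exact Nat.card_congr (Equiv.setCongr hparents)

theorem card_parents_eq_of_fst_eq (hmono : Monotone H) {x y : Σ n, G ⧸ H n} (hxy : x.1 = y.1) :
    Nat.card {w // CosetLE H w x ∧ w ≠ x ∧ w.1 + 1 = x.1} =
      Nat.card {w // CosetLE H w y ∧ w ≠ y ∧ w.1 + 1 = y.1} := by
  obtain hx | ⟨n, hx⟩ := (Nat.eq_zero_or_pos x.1).imp_right Nat.exists_eq_add_one.mpr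
  · have hempty (z : Σ n, G ⧸ H n) (hz : z.1 = 0) :
        IsEmpty {w // CosetLE H w z ∧ w ≠ z ∧ w.1 + 1 = z.1} :=
      ⟨fun w => by have := w.2.2.2; omega⟩
    rw [@Nat.card_of_isEmpty _ (hempty x hx), @Nat.card_of_isEmpty _ (hempty y (hxy ▸ hx))]
  · have hparents (z : Σ n, G ⧸ H n) (hz : z.1 = n + 1) :
        Nat.card {w // CosetLE H w z ∧ w ≠ z ∧ w.1 + 1 = z.1} =
          (H n).relIndex (H (n + 1)) := by
      rw [← card_parents_of_fst_eq_succ hmono hz]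
      exact Nat.card_congr (Equiv.subtypeEquivRight fun w => and_congr_right' <|
        and_congr_right' ⟨fun h => by omega, fun h => by omega⟩)
    rw [hparents x hx, hparents y (hxy ▸ hx)]

end CosetTower

theorem stmt15_general {G : Type*} [Group G] (H : ℕ → Subgroup G)
    (hmono : Monotone H) (hunion : ∀ g : G, ∃ n : ℕ, g ∈ H n) :
    ∀ le : (Σ n : ℕ, G ⧸ H n) → (Σ n : ℕ, G ⧸ H n) → Prop,
      le = (fun a b => a.1 ≤ b.1 ∧
        ∃ g : G, a.2 = QuotientGroup.mk g ∧ b.2 = QuotientGroup.mk g) →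
      -- `le` (inclusion of cosets) is a partial order:
      IsPartialOrder (Σ n : ℕ, G ⧸ H n) le ∧
      -- well-foundedness:
      WellFounded (fun a b : Σ n : ℕ, G ⧸ H n => le a b ∧ a ≠ b) ∧
      -- any two elements have a least upper bound:
      (∀ a b : Σ n : ℕ, G ⧸ H n, ∃ s, le a s ∧ le b s ∧
        ∀ t, le a t → le b t → le s t) ∧
      -- upper cones are linearly ordered:
      (∀ a b c : Σ n : ℕ, G ⧸ H n, le a b → le a c → le b c ∨ le c b) ∧
      -- the level of a coset of `H n` is `n + 1`:
      (∀ a x : Σ n : ℕ, G ⧸ H n, le x a → (∀ w, le w x → w = x) →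
        Nat.card {w : Σ n : ℕ, G ⧸ H n // le x w ∧ le w a} = a.1 + 1) ∧
      -- every coset of `H (n+1)` has exactly `[H (n+1) : H n]` parents:
      (∀ (n : ℕ) (x : Σ n : ℕ, G ⧸ H n), x.1 = n + 1 →
        Nat.card {w : Σ n : ℕ, G ⧸ H n // le w x ∧ w ≠ x ∧ w.1 = n} =
          (H n).relIndex (H (n + 1))) ∧
      -- homogeneity: elements of the same level have equally many parents:
      (∀ x y : Σ n : ℕ, G ⧸ H n, x.1 = y.1 →
        Nat.card {w : Σ n : ℕ, G ⧸ H n // le w x ∧ w ≠ x ∧ w.1 + 1 = x.1} =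
          Nat.card {w : Σ n : ℕ, G ⧸ H n // le w y ∧ w ≠ y ∧ w.1 + 1 = y.1}) := by
  rintro le rfl
  exact ⟨CosetTower.isPartialOrder_cosetLE hmono, CosetTower.wellFounded_cosetLT,
    CosetTower.exists_lub hmono hunion,
    fun _ _ _ => CosetTower.cosetLE_total_of_cosetLE hmono,
    fun _ _ => CosetTower.card_interval_of_minimal hmono,
    fun _ _ => CosetTower.card_parents_of_fst_eq_succ hmono,
    fun _ _ => CosetTower.card_parents_eq_of_fst_eq hmono⟩

/-- If a group `G` is the union of an increasing sequence of subgroups `H n` with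
`H 0` trivial, then the set of cosets `{gH_n : g ∈ G, n ∈ ℕ}` (a coset of `H n`
being recorded together with its index `n`, i.e. as an element of `Σ n, G ⧸ H n`),
ordered by inclusion, is a homogeneous tower (with `lev (gH_n) = n + 1`) in which
every coset of `H (n+1)` has exactly `[H (n+1) : H n]` parents. -/
theorem stmt15 {G : Type*} [Group G] (H : ℕ → Subgroup G)
    (h0 : H 0 = ⊥) (hmono : Monotone H) (hunion : ∀ g : G, ∃ n : ℕ, g ∈ H n) :
    ∀ le : (Σ n : ℕ, G ⧸ H n) → (Σ n : ℕ, G ⧸ H n) → Prop,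
      le = (fun a b => a.1 ≤ b.1 ∧
        ∃ g : G, a.2 = QuotientGroup.mk g ∧ b.2 = QuotientGroup.mk g) →
      -- `le` (inclusion of cosets) is a partial order:
      IsPartialOrder (Σ n : ℕ, G ⧸ H n) le ∧
      -- well-foundedness:
      WellFounded (fun a b : Σ n : ℕ, G ⧸ H n => le a b ∧ a ≠ b) ∧
      -- any two elements have a least upper bound:
      (∀ a b : Σ n : ℕ, G ⧸ H n, ∃ s, le a s ∧ le b s ∧
        ∀ t, le a t → le b t → le s t) ∧
      -- upper cones are linearly ordered:
      (∀ a b c : Σ n : ℕ, G ⧸ H n, le a b → le a c → le b c ∨ le c b) ∧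
      -- the level of a coset of `H n` is `n + 1`:
      (∀ a x : Σ n : ℕ, G ⧸ H n, le x a → (∀ w, le w x → w = x) →
        Nat.card {w : Σ n : ℕ, G ⧸ H n // le x w ∧ le w a} = a.1 + 1) ∧
      -- every coset of `H (n+1)` has exactly `[H (n+1) : H n]` parents:
      (∀ (n : ℕ) (x : Σ n : ℕ, G ⧸ H n), x.1 = n + 1 →
        Nat.card {w : Σ n : ℕ, G ⧸ H n // le w x ∧ w ≠ x ∧ w.1 = n} =
          (H n).relIndex (H (n + 1))) ∧
      -- homogeneity: elements of the same level have equally many parents: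
      (∀ x y : Σ n : ℕ, G ⧸ H n, x.1 = y.1 →
        Nat.card {w : Σ n : ℕ, G ⧸ H n // le w x ∧ w ≠ x ∧ w.1 + 1 = x.1} =
          Nat.card {w : Σ n : ℕ, G ⧸ H n // le w y ∧ w ≠ y ∧ w.1 + 1 = y.1}) :=
  stmt15_general H hmono hunion
end

section
/- Let X be an ultra-metric space and (r_n)_{n∈ℕ} an unbounded strictly increasing sequence of nonnegative reals. Then the set T_X = {(B_{r_n}(x), n) : x ∈ X, n ∈ ℕ}, partially ordered by (B,n) ≤ (B',m) iff n ≤ m and B ⊆ B', is a tower with level function lev((B_{r_n}(x),n)) = n. -/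
/-!
In an ultrametric space two closed balls that meet are nested, the one of smaller radius inside
the other. Hence the elements of `T_X` (here `BallTower X r`) whose ball contains a given point
form a chain with exactly one element at each level: upper cones are chains, comparable elements
at the same level are equal, so the level is strictly monotone and counts the elements of an
interval. Two elements `(B_{r m}(x), m)`, `(B_{r n}(y), n)` have the common upper bound
`(B_{r k}(x), k)` as soon as `r k ≥ d(x, y)`, and the least upper bound is the common upper bound
of least level, which exists by well-foundedness.
-/

open Metric

theorem IsUltrametricDist.closedBall_subset_closedBall_of_nonempty_inter {X : Type*}
    [PseudoMetricSpace X] [IsUltrametricDist X] {x y : X} {r s : ℝ} (hrs : r ≤ s)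
    (h : (closedBall x r ∩ closedBall y s).Nonempty) : closedBall x r ⊆ closedBall y s := by
  obtain ⟨z, hzx, hzy⟩ := h
  rw [closedBall_eq_of_mem hzx, closedBall_eq_of_mem hzy]
  exact closedBall_subset_closedBall hrs

theorem exists_isLUB_pair_of_isChain_Ici {α : Type*} [PartialOrder α] [WellFoundedLT α] {a b : α}
    (hchain : IsChain (· ≤ ·) (Set.Ici a)) (hbdd : BddAbove {a, b}) : ∃ s, IsLUB {a, b} s := by
  obtain ⟨s, hs, hmin⟩ := wellFounded_lt.has_min (upperBounds {a, b}) hbdd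
  refine ⟨s, hs, fun t ht => ?_⟩
  rcases hchain.total (hs (Set.mem_insert a _)) (ht (Set.mem_insert a _)) with hst | hts
  · exact hst
  · exact (eq_of_le_of_not_lt hts (hmin t ht)).ge

def BallTower (X : Type*) [PseudoMetricSpace X] (r : ℕ → ℝ) : Type _ :=
  {p : Set X × ℕ // ∃ x : X, p.1 = closedBall x (r p.2)}

namespace BallTower

section Basic

variable {X : Type*} [PseudoMetricSpace X] {r : ℕ → ℝ}

def ball (a : BallTower X r) : Set X := (Subtype.val a).1

def level (a : BallTower X r) : ℕ := (Subtype.val a).2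

def mk (x : X) (n : ℕ) : BallTower X r := ⟨(closedBall x (r n), n), x, rfl⟩

@[simp] theorem ball_mk (x : X) (n : ℕ) : (mk x n : BallTower X r).ball = closedBall x (r n) := rfl

theorem exists_eq_closedBall (a : BallTower X r) : ∃ x, a.ball = closedBall x (r a.level) :=
  Subtype.property a

theorem ext {a b : BallTower X r} (hball : a.ball = b.ball) (hlevel : a.level = b.level) :
    a = b :=
  Subtype.ext (Prod.ext hball hlevel)

theorem ball_nonempty (hr : ∀ n, 0 ≤ r n) (a : BallTower X r) : a.ball.Nonempty := by
  obtain ⟨x, hx⟩ := a.exists_eq_closedBall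
  exact hx ▸ nonempty_closedBall.2 (hr _)

instance : LE (BallTower X r) := ⟨fun a b => a.level ≤ b.level ∧ a.ball ⊆ b.ball⟩

theorem level_eq_zero_of_isMin (hr : Monotone r) {a : BallTower X r} (ha : IsMin a) :
    a.level = 0 := by
  obtain ⟨x, hx⟩ := a.exists_eq_closedBall
  have hle : (mk x 0 : BallTower X r) ≤ a :=
    ⟨Nat.zero_le _, hx ▸ closedBall_subset_closedBall (hr (Nat.zero_le _))⟩
  exact Nat.le_zero.1 (ha hle).1

end Basic

variable {X : Type*} [PseudoMetricSpace X] [IsUltrametricDist X] {r : ℕ → ℝ}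

theorem eq_of_le_of_level_eq {a b : BallTower X r} (hab : a ≤ b) (hlevel : a.level = b.level) :
    a = b := by
  refine ext (hab.2.antisymm ?_) hlevel
  obtain ⟨x, hx⟩ := a.exists_eq_closedBall
  obtain ⟨y, hy⟩ := b.exists_eq_closedBall
  have hsub := hab.2
  rw [hx, hy, hlevel] at hsub ⊢
  rcases IsUltrametricDist.closedBall_eq_or_disjoint x y (r b.level) with heq | hdisj
  · exact heq.ge
  · -- a ball inside a disjoint ball is empty, so the common radius is negative
    have hneg := closedBall_eq_empty.1 (hdisj.eq_bot_of_le hsub)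
    simp [closedBall_eq_empty.2 hneg]

instance : PartialOrder (BallTower X r) where
  le_refl _ := ⟨le_rfl, subset_rfl⟩
  le_trans _ _ _ hab hbc := ⟨hab.1.trans hbc.1, hab.2.trans hbc.2⟩
  le_antisymm _ _ hab hba := eq_of_le_of_level_eq hab (hab.1.antisymm hba.1)

theorem level_strictMono : StrictMono (level : BallTower X r → ℕ) := fun _ _ hab =>
  hab.le.1.lt_of_ne fun hlevel => hab.ne (eq_of_le_of_level_eq hab.le hlevel)

instance : WellFoundedLT (BallTower X r) := level_strictMono.wellFoundedLT

theorem le_of_level_le (hr : Monotone r) {a b : BallTower X r} (hlevel : a.level ≤ b.level)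
    (hinter : (a.ball ∩ b.ball).Nonempty) : a ≤ b := by
  obtain ⟨x, hx⟩ := a.exists_eq_closedBall
  obtain ⟨y, hy⟩ := b.exists_eq_closedBall
  rw [hx, hy] at hinter
  refine ⟨hlevel, ?_⟩
  rw [hx, hy]
  exact IsUltrametricDist.closedBall_subset_closedBall_of_nonempty_inter (hr hlevel) hinter

theorem isChain_Ici (hr : Monotone r) (hr0 : ∀ n, 0 ≤ r n) (a : BallTower X r) :
    IsChain (· ≤ ·) (Set.Ici a) := by
  intro b hab c hac _
  obtain ⟨z, hz⟩ := a.ball_nonempty hr0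
  have hzbc : z ∈ b.ball ∩ c.ball := ⟨hab.2 hz, hac.2 hz⟩
  rcases le_total b.level c.level with hbc | hcb
  · exact Or.inl (le_of_level_le hr hbc ⟨z, hzbc⟩)
  · exact Or.inr (le_of_level_le hr hcb ⟨z, hzbc.symm⟩)

theorem bddAbove_pair (hr : Monotone r) (hub : ∀ C : ℝ, ∃ n, C < r n) (a b : BallTower X r) :
    BddAbove ({a, b} : Set (BallTower X r)) := by
  obtain ⟨x, hx⟩ := a.exists_eq_closedBall
  obtain ⟨y, hy⟩ := b.exists_eq_closedBall
  obtain ⟨n, hn⟩ := hub (dist y x)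
  set k := max n (max a.level b.level)
  have hnk : n ≤ k := le_max_left _ _
  have hak : a.level ≤ k := (le_max_left _ _).trans (le_max_right _ _)
  have hbk : b.level ≤ k := (le_max_right _ _).trans (le_max_right _ _)
  have hxy : y ∈ closedBall x (r k) := (hn.trans_le (hr hnk)).le
  refine ⟨mk x k, ?_⟩
  rintro c (rfl | rfl)
  · refine ⟨hak, ?_⟩
    rw [hx, ball_mk]
    exact closedBall_subset_closedBall (hr hak)
  · refine ⟨hbk, ?_⟩
    rw [hy, ball_mk, IsUltrametricDist.closedBall_eq_of_mem hxy]
    exact closedBall_subset_closedBall (hr hbk)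

theorem bijOn_level_Icc (hr : Monotone r) (hr0 : ∀ n, 0 ≤ r n) {a b : BallTower X r}
    (hab : a ≤ b) : Set.BijOn level (Set.Icc a b) (Set.Icc a.level b.level) := by
  refine ⟨fun c hc => ⟨hc.1.1, hc.2.1⟩, fun c hc d hd hlevel => ?_, fun n hn => ?_⟩
  · rcases (isChain_Ici hr hr0 a).total hc.1 hd.1 with hcd | hdc
    · exact eq_of_le_of_level_eq hcd hlevel
    · exact (eq_of_le_of_level_eq hdc hlevel.symm).symm
  · obtain ⟨z, hz⟩ := a.ball_nonempty hr0
    have hzn : z ∈ (mk z n : BallTower X r).ball := mem_closedBall_self (hr0 n)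
    exact ⟨mk z n, ⟨le_of_level_le hr hn.1 ⟨z, hz, hzn⟩,
      le_of_level_le hr hn.2 ⟨z, hzn, hab.2 hz⟩⟩, rfl⟩

theorem card_Icc (hr : Monotone r) (hr0 : ∀ n, 0 ≤ r n) {a b : BallTower X r} (hab : a ≤ b) :
    Nat.card (Set.Icc a b) = b.level + 1 - a.level := by
  rw [Nat.card_congr ((bijOn_level_Icc hr hr0 hab).equiv level), Nat.card_coe_set_eq,
    Set.ncard_Icc_nat]

end BallTower

open BallTower in
/-- For an ultra-metric space `X` and an unbounded strictly increasing sequence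
`(r_n)` of nonnegative reals, the set `T_X = {(B_{r n}(x), n) : x ∈ X, n ∈ ℕ}`,
ordered by `(B, n) ≤ (B', m)` iff `n ≤ m` and `B ⊆ B'`, is a tower with level
function `lev (B_{r n}(x), n) = n + 1`. -/
theorem stmt16 {X : Type*} [MetricSpace X]
    (hu : ∀ x y z : X, dist x z ≤ max (dist x y) (dist y z))
    (r : ℕ → ℝ) (hr : StrictMono r) (hr0 : 0 ≤ r 0) (hub : ∀ C : ℝ, ∃ n : ℕ, C < r n) :
    ∀ le : {p : Set X × ℕ // ∃ x : X, p.1 = Metric.closedBall x (r p.2)} →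
           {p : Set X × ℕ // ∃ x : X, p.1 = Metric.closedBall x (r p.2)} → Prop,
      le = (fun a b => a.1.2 ≤ b.1.2 ∧ a.1.1 ⊆ b.1.1) →
      -- `le` is a partial order:
      IsPartialOrder {p : Set X × ℕ // ∃ x : X, p.1 = Metric.closedBall x (r p.2)} le ∧
      -- well-foundedness:
      WellFounded (fun a b : {p : Set X × ℕ // ∃ x : X, p.1 = Metric.closedBall x (r p.2)} =>
        le a b ∧ a ≠ b) ∧
      -- any two elements have a least upper bound:
      (∀ a b, ∃ s, le a s ∧ le b s ∧ ∀ t, le a t → le b t → le s t) ∧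
      -- upper cones are linearly ordered:
      (∀ a b c, le a b → le a c → le b c ∨ le c b) ∧
      -- the level of `(B_{r n}(x), n)` is `n + 1`:
      (∀ a x, le x a → (∀ w, le w x → w = x) →
        Nat.card {w : {p : Set X × ℕ // ∃ x : X, p.1 = Metric.closedBall x (r p.2)} //
          le x w ∧ le w a} = a.1.2 + 1) := by
  rintro le rfl
  have : IsUltrametricDist X := ⟨hu⟩
  have hmono := hr.monotone
  have hnonneg : ∀ n, 0 ≤ r n := fun n => hr0.trans (hmono (Nat.zero_le n))
  refine ⟨inferInstanceAs (IsPartialOrder (BallTower X r) (· ≤ ·)),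
    Subrelation.wf (r := ((· < ·) : BallTower X r → BallTower X r → Prop))
      (fun h => lt_of_le_of_ne h.1 h.2) wellFounded_lt,
    fun a b => ?_, fun a b c => (isChain_Ici hmono hnonneg a).total,
    fun a x hxa hmin => ?_⟩
  · obtain ⟨s, hs⟩ := exists_isLUB_pair_of_isChain_Ici (isChain_Ici hmono hnonneg a)
      (bddAbove_pair hmono hub a b)
    exact ⟨s, hs.1 (Set.mem_insert a _), hs.1 (Set.mem_insert_of_mem a rfl),
      fun t hat hbt => hs.2 (by rintro _ (rfl | rfl) <;> assumption)⟩
  · have hx : level x = 0 :=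
      level_eq_zero_of_isMin hmono fun w hw => by rw [hmin w hw]; exact le_rfl
    have hcard := card_Icc hmono hnonneg hxa
    rw [hx, Nat.sub_zero] at hcard
    exact hcard
end

section
/- Let φ : T₁ → T₂ be an admissible morphism between towers. Then the restriction Φ = φ|[T₁] : [T₁] → [T₂] is an asymorphism of the bases: whenever A ⊆ [T₁] has diameter ≤ 2n then diam(Φ(A)) ≤ 2n, and whenever B ⊆ [T₂] has diameter ≤ 2n then diam(Φ^{-1}(B)) ≤ 2n + 2 (all diameters in the respective path metrics). -/
/-!
For base points `a, b` write `s = lub a b` and `t = lub (φ a) (φ b)`. On the base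
`d(a, b) = 2 lev s - 2`, so it suffices that `lev t ≤ lev s ≤ lev t + 1`. The first inequality
holds because `t ≤ φ s` and `φ` preserves levels. For the second, if `lev t < lev s`, the chains
from `a` and from `b` up to `s` contain elements `c`, `d` of level `lev t`; both are mapped to the
unique element of that level above `φ a`, namely `t`, so `c` and `d` have a common child `v`.
Then `s ≤ v`, and `lev v = lev t + 1`. Levels are compared as cardinalities of intervals in `ℕ∞`,
which also takes care of the junk level `0` of infinite intervals.
-/

open Set

section Order

variable {T : Type*} [PartialOrder T]

theorem eq_of_encard_Icc_eq (hchain : ∀ x : T, IsChain (· ≤ ·) {y : T | x ≤ y}) {x u v : T}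
    (hu : x ≤ u) (hv : x ≤ v) (h : (Icc x u).encard = (Icc x v).encard)
    (hfin : (Icc x u).encard ≠ ⊤) : u = v := by
  wlog huv : u ≤ v generalizing u v
  · exact (this hv hu h.symm (h ▸ hfin) (((hchain x).total hu hv).resolve_left huv)).symm
  have hIcc := (finite_of_encard_eq_coe (ENat.natCast_toNat hfin).symm).eq_of_subset_of_encard_le
    (Icc_subset_Icc_right huv) h.ge
  exact huv.antisymm (hIcc ▸ right_mem_Icc.2 hv : v ∈ Icc x u).2

theorem exists_encard_Icc_eq [WellFoundedLT T]
    (hchain : ∀ x : T, IsChain (· ≤ ·) {y : T | x ≤ y}) {a s : T} (has : a ≤ s) {m : ℕ}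
    (hm : 1 ≤ m) (hms : (m : ℕ∞) ≤ (Icc a s).encard) :
    ∃ c, a ≤ c ∧ c ≤ s ∧ (Icc a c).encard = m := by
  induction m, hm using Nat.le_induction with
  | base => exact ⟨a, le_rfl, has, by simp⟩
  | succ m _ ih =>
    obtain ⟨c, hac, hcs, hc⟩ := ih (le_trans (by simp) hms)
    have hcs' : c < s := hcs.lt_of_ne <| by
      rintro rfl
      rw [hc, Nat.cast_succ] at hms
      exact (ENat.lt_add_one_iff (ENat.natCast_ne_top m)).2 le_rfl |>.not_ge hms
    obtain ⟨c', hc'⟩ := exists_minimal_of_wellFoundedLT (fun z => c < z ∧ z ≤ s) ⟨s, hcs', le_rfl⟩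
    -- `c'` is the successor of `c` in the chain above `a`
    have hIcc : Icc a c' = insert c' (Icc a c) := by
      ext z
      refine ⟨fun ⟨haz, hzc'⟩ => ?_, ?_⟩
      · rcases (hchain a).total hac haz with hcz | hzc
        · rcases hcz.lt_or_eq with hcz | rfl
          · exact Or.inl (hc'.eq_of_le ⟨hcz, hzc'.trans hc'.prop.2⟩ hzc')
          · exact Or.inr ⟨haz, le_rfl⟩
        · exact Or.inr ⟨haz, hzc⟩
      · rintro (rfl | ⟨haz, hzc⟩)
        · exact ⟨hac.trans hc'.prop.1.le, le_rfl⟩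
        · exact ⟨haz, hzc.trans hc'.prop.1.le⟩
    refine ⟨c', hac.trans hc'.prop.1.le, hc'.prop.2, ?_⟩
    rw [hIcc, encard_insert_of_notMem (fun h => h.2.not_gt hc'.prop.1), hc, Nat.cast_succ]

theorem IsLUB.le_of_pair {a b s v : T} (hs : IsLUB {a, b} s)
    (ha : a ≤ v) (hb : b ≤ v) : s ≤ v :=
  hs.2 (by simp [upperBounds_insert, ha, hb])

end Order

theorem ENat.toNat_le_toNat_le_add_one {m n : ℕ∞} (h₁ : m ≤ n) (h₂ : n ≤ m + 1) :
    m.toNat ≤ n.toNat ∧ n.toNat ≤ m.toNat + 1 := by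
  induction m using ENat.recTopCoe with
  | top => simp [top_le_iff.1 h₁]
  | coe k =>
    induction n using ENat.recTopCoe with
    | top => exact absurd h₂ (by simp)
    | coe l =>
      simp only [ENat.toNat_natCast]
      exact ⟨by exact_mod_cast h₁, by exact_mod_cast h₂⟩

/-- In a tower the level of `a` is the number of elements of `Icc x a` for any minimal `x ≤ a`;
through `Nat.card`, an infinite interval gets the junk level `0`. -/
structure IsTowerLevel {T : Type*} [PartialOrder T] (lev : T → ℕ) : Prop where
  wellFounded : WellFounded ((· < ·) : T → T → Prop)
  isChain : ∀ x : T, IsChain (· ≤ ·) {y : T | x ≤ y}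
  card_Icc : ∀ a x : T, IsMin x → x ≤ a → Nat.card (Icc x a) = lev a

namespace IsTowerLevel

variable {T : Type*} [PartialOrder T] {lev : T → ℕ} {a x : T}

theorem wellFoundedLT (h : IsTowerLevel lev) : WellFoundedLT T := ⟨h.wellFounded⟩

theorem toNat_encard_Icc (h : IsTowerLevel lev) (hx : IsMin x) (hxa : x ≤ a) :
    (Icc x a).encard.toNat = lev a := by
  rw [← ncard_def, ← Nat.card_coe_set_eq, h.card_Icc a x hx hxa]

theorem encard_Icc (h : IsTowerLevel lev) (hx : IsMin x) (hxa : x ≤ a) :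
    (Icc x a).encard = if lev a = 0 then ⊤ else (lev a : ℕ∞) := by
  rw [← h.toNat_encard_Icc hx hxa]
  have hne : (Icc x a).encard ≠ 0 := encard_ne_zero.2 ⟨x, le_rfl, hxa⟩
  split_ifs with h0
  · exact (ENat.toNat_eq_zero.1 h0).resolve_left hne
  · exact (ENat.natCast_toNat fun htop => h0 (by simp [htop])).symm

theorem isMin_iff (h : IsTowerLevel lev) : IsMin a ↔ lev a = 1 := by
  refine ⟨fun ha => by simpa using (h.card_Icc a a ha le_rfl).symm, fun ha => ?_⟩
  have := h.wellFoundedLT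
  obtain ⟨x, hx⟩ := exists_minimal_of_wellFoundedLT (· ≤ a) ⟨a, le_rfl⟩
  obtain ⟨hxa, hx⟩ := minimal_le_iff.1 hx
  have hone : (Icc x a).encard ≤ 1 := by simp [h.encard_Icc hx hxa, ha]
  rwa [← encard_le_one_iff.1 hone x a ⟨le_rfl, hxa⟩ ⟨hxa, le_rfl⟩]

end IsTowerLevel

structure IsTowerMap {T₁ T₂ : Type*} [PartialOrder T₁] [PartialOrder T₂]
    (lev₁ : T₁ → ℕ) (lev₂ : T₂ → ℕ) (φ : T₁ → T₂) : Prop where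
  lev_map : ∀ a, lev₂ (φ a) = lev₁ a
  monotone : Monotone φ
  exists_common_child : ∀ a a', φ a = φ a' →
    ∃ v, a ≤ v ∧ a' ≤ v ∧ lev₁ a + 1 = lev₁ v ∧ lev₁ a' + 1 = lev₁ v

namespace IsTowerMap

variable {T₁ T₂ : Type*} [PartialOrder T₁] [PartialOrder T₂] {lev₁ : T₁ → ℕ} {lev₂ : T₂ → ℕ}
  {φ : T₁ → T₂} {a b x s : T₁} {t : T₂}

theorem isMin_map (hφ : IsTowerMap lev₁ lev₂ φ) (h₁ : IsTowerLevel lev₁)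
    (h₂ : IsTowerLevel lev₂) (ha : IsMin a) : IsMin (φ a) := by
  rw [h₂.isMin_iff, hφ.lev_map, ← h₁.isMin_iff]
  exact ha

theorem encard_Icc_map (hφ : IsTowerMap lev₁ lev₂ φ) (h₁ : IsTowerLevel lev₁)
    (h₂ : IsTowerLevel lev₂) (hx : IsMin x) (hxa : x ≤ a) :
    (Icc (φ x) (φ a)).encard = (Icc x a).encard := by
  rw [h₂.encard_Icc (hφ.isMin_map h₁ h₂ hx) (hφ.monotone hxa), h₁.encard_Icc hx hxa, hφ.lev_map]

theorem encard_Icc_lub_map_le (hφ : IsTowerMap lev₁ lev₂ φ) (h₁ : IsTowerLevel lev₁)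
    (h₂ : IsTowerLevel lev₂) (ha : IsMin a) (hs : IsLUB {a, b} s) (ht : IsLUB {φ a, φ b} t) :
    (Icc (φ a) t).encard ≤ (Icc a s).encard := by
  have has : a ≤ s := hs.1 (mem_insert a _)
  have hbs : b ≤ s := hs.1 (mem_insert_of_mem _ rfl)
  have hts : t ≤ φ s := ht.le_of_pair (hφ.monotone has) (hφ.monotone hbs)
  rw [← hφ.encard_Icc_map h₁ h₂ ha has]
  exact encard_le_encard (Icc_subset_Icc_right hts)

theorem encard_Icc_lub_le (hφ : IsTowerMap lev₁ lev₂ φ) (h₁ : IsTowerLevel lev₁)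
    (h₂ : IsTowerLevel lev₂) (ha : IsMin a) (hb : IsMin b) (hs : IsLUB {a, b} s)
    (ht : IsLUB {φ a, φ b} t) : (Icc a s).encard ≤ (Icc (φ a) t).encard + 1 := by
  have := h₁.wellFoundedLT
  have has : a ≤ s := hs.1 (mem_insert a _)
  have hbs : b ≤ s := hs.1 (mem_insert_of_mem _ rfl)
  have hat : φ a ≤ t := ht.1 (mem_insert _ _)
  have hbt : φ b ≤ t := ht.1 (mem_insert_of_mem _ rfl)
  have hφa := hφ.isMin_map h₁ h₂ ha
  have hφb := hφ.isMin_map h₁ h₂ hb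
  rcases eq_or_ne (Icc (φ a) t).encard ⊤ with htop | htop
  · simp [htop]
  lift (Icc (φ a) t).encard to ℕ using htop with m hm
  rcases le_or_gt (Icc a s).encard m with hle | hlt
  · exact hle.trans le_self_add
  have hm1 : 1 ≤ m := by
    have := encard_ne_zero.2 (⟨φ a, le_rfl, hat⟩ : (Icc (φ a) t).Nonempty)
    rw [← hm] at this
    exact Nat.one_le_iff_ne_zero.2 (by exact_mod_cast this)
  have hsb : (Icc b s).encard = (Icc a s).encard := by
    rw [h₁.encard_Icc ha has, h₁.encard_Icc hb hbs]
  have htb : (Icc (φ b) t).encard = m := by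
    rw [hm, h₂.encard_Icc hφa hat, h₂.encard_Icc hφb hbt]
  have hlevel {x : T₁} (hx : IsMin x) (hxs : x ≤ s) (hφxt : φ x ≤ t)
      (hxt : (Icc (φ x) t).encard = m) (hsx : (Icc x s).encard = (Icc a s).encard) :
      ∃ c, x ≤ c ∧ φ c = t ∧ lev₁ c = m := by
    obtain ⟨c, hxc, -, hc⟩ := exists_encard_Icc_eq h₁.isChain hxs hm1 (hsx ▸ hlt.le)
    refine ⟨c, hxc, eq_of_encard_Icc_eq h₂.isChain (hφ.monotone hxc) hφxt ?_ ?_, ?_⟩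
    · rw [hφ.encard_Icc_map h₁ h₂ hx hxc, hc, hxt]
    · rw [hφ.encard_Icc_map h₁ h₂ hx hxc, hc]
      exact ENat.natCast_ne_top m
    · rw [← h₁.toNat_encard_Icc hx hxc, hc, ENat.toNat_natCast]
  obtain ⟨c, hac, hct, hc⟩ := hlevel ha has hat hm.symm rfl
  obtain ⟨d, hbd, hdt, -⟩ := hlevel hb hbs hbt htb hsb
  obtain ⟨v, hcv, hdv, hv, -⟩ := hφ.exists_common_child c d (hct.trans hdt.symm)
  have hsv : s ≤ v := hs.le_of_pair (hac.trans hcv) (hbd.trans hdv)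
  calc (Icc a s).encard ≤ (Icc a v).encard := encard_le_encard (Icc_subset_Icc_right hsv)
    _ = m + 1 := by rw [h₁.encard_Icc ha (has.trans hsv), ← hv, hc]; simp

theorem lev_lub_map_le_and_le (hφ : IsTowerMap lev₁ lev₂ φ) (h₁ : IsTowerLevel lev₁)
    (h₂ : IsTowerLevel lev₂) (ha : IsMin a) (hb : IsMin b) (hs : IsLUB {a, b} s)
    (ht : IsLUB {φ a, φ b} t) : lev₂ t ≤ lev₁ s ∧ lev₁ s ≤ lev₂ t + 1 := by
  rw [← h₁.toNat_encard_Icc ha (hs.1 (mem_insert a _)),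
    ← h₂.toNat_encard_Icc (hφ.isMin_map h₁ h₂ ha) (ht.1 (mem_insert _ _))]
  exact ENat.toNat_le_toNat_le_add_one (hφ.encard_Icc_lub_map_le h₁ h₂ ha hs ht)
    (hφ.encard_Icc_lub_le h₁ h₂ ha hb hs ht)

end IsTowerMap

theorem stmt17_general {T₁ T₂ : Type*} [PartialOrder T₁] [PartialOrder T₂]
    (lev₁ : T₁ → ℕ) (lub₁ : T₁ → T₁ → T₁)
    (hwf₁ : WellFounded ((· < ·) : T₁ → T₁ → Prop))
    (hlub₁ : ∀ x y : T₁, IsLUB {x, y} (lub₁ x y))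
    (hchain₁ : ∀ x : T₁, IsChain (· ≤ ·) {y : T₁ | x ≤ y})
    (hlev₁ : ∀ a x : T₁, IsMin x → x ≤ a → Nat.card (Set.Icc x a) = lev₁ a)
    (lev₂ : T₂ → ℕ) (lub₂ : T₂ → T₂ → T₂)
    (hwf₂ : WellFounded ((· < ·) : T₂ → T₂ → Prop))
    (hlub₂ : ∀ x y : T₂, IsLUB {x, y} (lub₂ x y))
    (hchain₂ : ∀ x : T₂, IsChain (· ≤ ·) {y : T₂ | x ≤ y})
    (hlev₂ : ∀ a x : T₂, IsMin x → x ≤ a → Nat.card (Set.Icc x a) = lev₂ a)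
    (φ : T₁ → T₂)
    -- admissibility:
    (hadm1 : ∀ a : T₁, lev₂ (φ a) = lev₁ a)
    (hadm2 : Monotone φ)
    (hadm3 : ∀ a a' : T₁, φ a = φ a' →
      ∃ v : T₁, a ≤ v ∧ a' ≤ v ∧ lev₁ a + 1 = lev₁ v ∧ lev₁ a' + 1 = lev₁ v) :
    ∀ dT₁ : T₁ → T₁ → ℝ, ∀ dT₂ : T₂ → T₂ → ℝ,
      dT₁ = (fun x y => 2 * (lev₁ (lub₁ x y) : ℝ) - (lev₁ x : ℝ) - (lev₁ y : ℝ)) →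
      dT₂ = (fun x y => 2 * (lev₂ (lub₂ x y) : ℝ) - (lev₂ x : ℝ) - (lev₂ y : ℝ)) →
      (∀ (n : ℕ) (a b : T₁), IsMin a → IsMin b →
        dT₁ a b ≤ 2 * n → dT₂ (φ a) (φ b) ≤ 2 * n) ∧
      (∀ (n : ℕ) (a b : T₁), IsMin a → IsMin b →
        dT₂ (φ a) (φ b) ≤ 2 * n → dT₁ a b ≤ 2 * n + 2) := by
  rintro _ _ rfl rfl
  have h₁ : IsTowerLevel lev₁ := ⟨hwf₁, hchain₁, hlev₁⟩
  have h₂ : IsTowerLevel lev₂ := ⟨hwf₂, hchain₂, hlev₂⟩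
  have hφ : IsTowerMap lev₁ lev₂ φ := ⟨hadm1, hadm2, hadm3⟩
  refine ⟨fun n a b ha hb hd => ?_, fun n a b ha hb hd => ?_⟩ <;>
  · obtain ⟨hts, hst⟩ := hφ.lev_lub_map_le_and_le h₁ h₂ ha hb (hlub₁ a b) (hlub₂ _ _)
    have hts' : (lev₂ (lub₂ (φ a) (φ b)) : ℝ) ≤ lev₁ (lub₁ a b) := by exact_mod_cast hts
    have hst' : (lev₁ (lub₁ a b) : ℝ) ≤ lev₂ (lub₂ (φ a) (φ b)) + 1 := by exact_mod_cast hst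
    simp only [hadm1, h₁.isMin_iff.1 ha, h₁.isMin_iff.1 hb, Nat.cast_one] at hd ⊢
    linarith

/-- Let `φ : T₁ → T₂` be an admissible morphism between towers (level-preserving,
monotone, with `φ a = φ a'` implying that `a, a'` are parents of a common element,
and with lower image).  Then the restriction of `φ` to the bases is an asymorphism:
subsets of the base of `T₁` of diameter `≤ 2n` have images of diameter `≤ 2n`, and
preimages of subsets of the base of `T₂` of diameter `≤ 2n` have diameter `≤ 2n + 2`
(in the path metrics). -/
theorem stmt17 {T₁ T₂ : Type*} [PartialOrder T₁] [PartialOrder T₂]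
    (lev₁ : T₁ → ℕ) (lub₁ : T₁ → T₁ → T₁)
    (hwf₁ : WellFounded ((· < ·) : T₁ → T₁ → Prop))
    (hlub₁ : ∀ x y : T₁, IsLUB {x, y} (lub₁ x y))
    (hchain₁ : ∀ x : T₁, IsChain (· ≤ ·) {y : T₁ | x ≤ y})
    (hlev₁ : ∀ a x : T₁, IsMin x → x ≤ a → Nat.card (Set.Icc x a) = lev₁ a)
    (lev₂ : T₂ → ℕ) (lub₂ : T₂ → T₂ → T₂)
    (hwf₂ : WellFounded ((· < ·) : T₂ → T₂ → Prop))
    (hlub₂ : ∀ x y : T₂, IsLUB {x, y} (lub₂ x y))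
    (hchain₂ : ∀ x : T₂, IsChain (· ≤ ·) {y : T₂ | x ≤ y})
    (hlev₂ : ∀ a x : T₂, IsMin x → x ≤ a → Nat.card (Set.Icc x a) = lev₂ a)
    (φ : T₁ → T₂)
    -- admissibility:
    (hadm1 : ∀ a : T₁, lev₂ (φ a) = lev₁ a)
    (hadm2 : Monotone φ)
    (hadm3 : ∀ a a' : T₁, φ a = φ a' →
      ∃ v : T₁, a ≤ v ∧ a' ≤ v ∧ lev₁ a + 1 = lev₁ v ∧ lev₁ a' + 1 = lev₁ v)
    (hadm4 : ∀ y ∈ Set.range φ, ∀ z : T₂, z ≤ y → z ∈ Set.range φ) :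
    ∀ dT₁ : T₁ → T₁ → ℝ, ∀ dT₂ : T₂ → T₂ → ℝ,
      dT₁ = (fun x y => 2 * (lev₁ (lub₁ x y) : ℝ) - (lev₁ x : ℝ) - (lev₁ y : ℝ)) →
      dT₂ = (fun x y => 2 * (lev₂ (lub₂ x y) : ℝ) - (lev₂ x : ℝ) - (lev₂ y : ℝ)) →
      (∀ (n : ℕ) (a b : T₁), IsMin a → IsMin b →
        dT₁ a b ≤ 2 * n → dT₂ (φ a) (φ b) ≤ 2 * n) ∧
      (∀ (n : ℕ) (a b : T₁), IsMin a → IsMin b →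
        dT₂ (φ a) (φ b) ≤ 2 * n → dT₁ a b ≤ 2 * n + 2) :=
  stmt17_general lev₁ lub₁ hwf₁ hlub₁ hchain₁ hlev₁ lev₂ lub₂ hwf₂ hlub₂ hchain₂ hlev₂ φ hadm1 hadm2
    hadm3
end

section
/- Every asymptotically zero-dimensional metric space (X,d) admits an ultrametric ρ on X such that the identity map (X,d) → (X,ρ) is a bijective asymorphism (both it and its inverse are bornologous); moreover, every bijective isometry of (X,d) is also an isometry of (X,ρ), so if (X,d) is homogeneous then (X,ρ) is a homogeneous ultra-metric space. -/
/-!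
Call `x` and `y` `D`-chain connected if they are joined by a finite chain of points with
consecutive distances at most `D`, and let `ρ(x, y)` be the least natural number `n` for which
they are `n`-chain connected. Concatenating chains gives the ultrametric inequality, and
isometries map chains to chains. A single step is a chain, so `ρ ≤ ⌈d⌉`. Conversely, a
`D`-chain never leaves a member of a cover whose members are more than `D` apart, so
asymptotic zero-dimensionality bounds `d` on the `ρ`-balls of radius `D` by the mesh of the cover.
-/

open Relation

section ChainConnected

variable {X : Type*}

def ChainConnected [PseudoMetricSpace X] (D : ℝ) : X → X → Prop :=
  ReflTransGen fun a b => dist a b ≤ D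

section Pseudo

variable [PseudoMetricSpace X] {D D' : ℝ} {x y : X}

theorem ChainConnected.refl (D : ℝ) (x : X) : ChainConnected D x x :=
  ReflTransGen.refl

theorem ChainConnected.of_dist_le (h : dist x y ≤ D) : ChainConnected D x y :=
  ReflTransGen.single h

theorem ChainConnected.mono (hD : D ≤ D') (h : ChainConnected D x y) : ChainConnected D' x y :=
  ReflTransGen.mono (fun _ _ hab => le_trans hab hD) _ _ h

theorem ChainConnected.trans {z : X} (hxy : ChainConnected D x y) (hyz : ChainConnected D y z) :
    ChainConnected D x z :=
  ReflTransGen.trans hxy hyz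

theorem ChainConnected.symm (h : ChainConnected D x y) : ChainConnected D y x := by
  induction h with
  | refl => exact .refl D x
  | tail _ hbc hyb => exact hyb.head (by rwa [dist_comm])

theorem ChainConnected.map {Y : Type*} [PseudoMetricSpace Y] {f : X → Y}
    (hf : ∀ a b, dist (f a) (f b) = dist a b) (h : ChainConnected D x y) :
    ChainConnected D (f x) (f y) :=
  ReflTransGen.lift f (p := fun a b => dist a b ≤ D) (fun a b hab => (hf a b).trans_le hab) _ _ h

theorem ChainConnected.mem_of_separated {𝒰 : Set (Set X)} (hcover : ⋃₀ 𝒰 = Set.univ)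
    (hsep : ∀ U ∈ 𝒰, ∀ V ∈ 𝒰, U ≠ V → ∀ u ∈ U, ∀ v ∈ V, D < dist u v)
    (h : ChainConnected D x y) {U : Set X} (hU : U ∈ 𝒰) (hxU : x ∈ U) : y ∈ U := by
  induction h with
  | refl => exact hxU
  | @tail b c _ hbc hbU =>
    obtain ⟨V, hV, hcV⟩ : c ∈ ⋃₀ 𝒰 := hcover ▸ Set.mem_univ c
    by_contra hcU
    have hUV : U ≠ V := fun hUV => hcU (hUV ▸ hcV)
    exact (hsep U hU V hV hUV b hbU c hcV).not_ge hbc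

theorem ChainConnected.edist_le {𝒰 : Set (Set X)} {B : ENNReal} (hcover : ⋃₀ 𝒰 = Set.univ)
    (hdiam : ∀ U ∈ 𝒰, Metric.ediam U ≤ B)
    (hsep : ∀ U ∈ 𝒰, ∀ V ∈ 𝒰, U ≠ V → ∀ u ∈ U, ∀ v ∈ V, D < dist u v)
    (h : ChainConnected D x y) : edist x y ≤ B := by
  obtain ⟨U, hU, hxU⟩ : x ∈ ⋃₀ 𝒰 := hcover ▸ Set.mem_univ x
  have hyU := h.mem_of_separated hcover hsep hU hxU
  exact (Metric.edist_le_ediam_of_mem hxU hyU).trans (hdiam U hU)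

end Pseudo

theorem chainConnected_zero_iff [MetricSpace X] {x y : X} : ChainConnected 0 x y ↔ x = y := by
  refine ⟨fun h => ?_, fun hxy => hxy ▸ .refl 0 x⟩
  induction h with
  | refl => rfl
  | tail _ hbc hxb => exact hxb.trans (dist_le_zero.mp hbc)

end ChainConnected

section ChainDist

variable {X : Type*} [PseudoMetricSpace X] {x y : X} {n : ℕ}

noncomputable def chainDist (x y : X) : ℕ :=
  sInf {n : ℕ | ChainConnected n x y}

theorem chainConnected_ceil_dist (x y : X) : ChainConnected ⌈dist x y⌉₊ x y :=
  .of_dist_le (Nat.le_ceil _)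

theorem chainConnected_chainDist (x y : X) : ChainConnected (chainDist x y) x y :=
  Nat.sInf_mem (s := {n : ℕ | ChainConnected n x y}) ⟨_, chainConnected_ceil_dist x y⟩

theorem chainDist_le (h : ChainConnected n x y) : chainDist x y ≤ n :=
  Nat.sInf_le h

theorem chainDist_comm (x y : X) : chainDist x y = chainDist y x :=
  le_antisymm (chainDist_le (chainConnected_chainDist y x).symm)
    (chainDist_le (chainConnected_chainDist x y).symm)

theorem chainDist_le_max (x y z : X) :
    chainDist x z ≤ max (chainDist x y) (chainDist y z) := by
  apply chainDist_le
  push_cast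
  exact ((chainConnected_chainDist x y).mono (le_max_left _ _)).trans
    ((chainConnected_chainDist y z).mono (le_max_right _ _))

theorem chainDist_le_ceil_dist (x y : X) : chainDist x y ≤ ⌈dist x y⌉₊ :=
  chainDist_le (chainConnected_ceil_dist x y)

theorem chainDist_map_le {Y : Type*} [PseudoMetricSpace Y] {f : X → Y} (hf : ∀ a b, dist (f a) (f b) = dist a b) (x y : X) :
    chainDist (f x) (f y) ≤ chainDist x y :=
  chainDist_le ((chainConnected_chainDist x y).map hf)

theorem chainDist_map_eq {f : X → X} (hf : Function.Bijective f)
    (hdist : ∀ a b, dist (f a) (f b) = dist a b) (x y : X) :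
    chainDist (f x) (f y) = chainDist x y := by
  obtain ⟨g, hgf, hfg⟩ := Function.bijective_iff_has_inverse.mp hf
  have hg : ∀ a b, dist (g a) (g b) = dist a b := fun a b => by rw [← hdist, hfg a, hfg b]
  refine le_antisymm (chainDist_map_le hdist x y) ?_
  simpa only [hgf x, hgf y] using chainDist_map_le hg (f x) (f y)

end ChainDist

theorem chainDist_eq_zero {X : Type*} [MetricSpace X] {x y : X} : chainDist x y = 0 ↔ x = y := by
  rw [← chainConnected_zero_iff (x := x) (y := y)]
  refine ⟨fun h => ?_, fun h => Nat.le_zero.mp (chainDist_le (by exact_mod_cast h))⟩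
  simpa [h] using chainConnected_chainDist x y

/-- Every asymptotically zero-dimensional metric space `(X, d)` admits an ultrametric
`ρ` such that the identity map `(X, d) → (X, ρ)` is a bijective asymorphism (it and
its inverse are bornologous), and every bijective isometry of `(X, d)` is an isometry
of `(X, ρ)`; in particular if `(X, d)` is homogeneous then `(X, ρ)` is a homogeneous
ultra-metric space. -/
theorem stmt18 {X : Type*} [MetricSpace X]
    (hzero : ∀ D : ℝ, 0 < D → ∃ 𝒰 : Set (Set X),
      (⋃₀ 𝒰 = Set.univ) ∧
      (∃ M : ℝ, ∀ U ∈ 𝒰, EMetric.diam U ≤ ENNReal.ofReal M) ∧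
      (∀ U ∈ 𝒰, ∀ V ∈ 𝒰, U ≠ V → ∀ u ∈ U, ∀ v ∈ V, D < dist u v)) :
    ∃ ρ : X → X → ℝ,
      -- `ρ` is an ultrametric:
      (∀ x y : X, 0 ≤ ρ x y) ∧
      (∀ x y : X, ρ x y = 0 ↔ x = y) ∧
      (∀ x y : X, ρ x y = ρ y x) ∧
      (∀ x y z : X, ρ x z ≤ max (ρ x y) (ρ y z)) ∧
      -- the identity map is a bijective asymorphism:
      (∀ ε : ℝ, ∃ δ : ℝ, ∀ x y : X, dist x y ≤ ε → ρ x y ≤ δ) ∧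
      (∀ ε : ℝ, ∃ δ : ℝ, ∀ x y : X, ρ x y ≤ ε → dist x y ≤ δ) ∧
      -- every bijective isometry of `(X, d)` is an isometry of `(X, ρ)`:
      (∀ f : X → X, Function.Bijective f → (∀ x y : X, dist (f x) (f y) = dist x y) →
        ∀ x y : X, ρ (f x) (f y) = ρ x y) := by
  refine ⟨fun x y => chainDist x y, fun _ _ => Nat.cast_nonneg _,
    fun _ _ => Nat.cast_eq_zero.trans chainDist_eq_zero,
    fun x y => congrArg Nat.cast (chainDist_comm x y),
    fun x y z => by beta_reduce; exact_mod_cast chainDist_le_max x y z,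
    fun ε => ⟨⌈ε⌉₊, fun x y hxy => ?_⟩, fun ε => ?_,
    fun f hf hdist x y => congrArg Nat.cast (chainDist_map_eq hf hdist x y)⟩
  · beta_reduce
    exact_mod_cast (chainDist_le_ceil_dist x y).trans (Nat.ceil_mono hxy)
  · obtain ⟨𝒰, hcover, ⟨M, hM⟩, hsep⟩ := hzero (max ε 1) (by positivity)
    refine ⟨max M 0, fun x y hxy => ?_⟩
    have hchain : ChainConnected (max ε 1) x y :=
      (chainConnected_chainDist x y).mono (le_max_of_le_left hxy)
    have hedist := hchain.edist_le hcover hM hsep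
    rw [edist_dist, ENNReal.ofReal_le_ofReal_iff'] at hedist
    exact hedist.elim (le_max_of_le_left ·) (le_max_of_le_right ·)
end
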